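/- arXiv:2511.12456 — 10 statements merged into one kernel-verified Lean document; each statement's English description precedes it below -/
import Mathlib

section
/- Fix integers r, r_C, N, C with 0 ≤ r_C ≤ min(C, r) and r − r_C < N; let v^N : Fin N → ℝ and v^C : Fin C → ℝ be antitone with nonnegative values, and let ε > 0. Define colluder bids b : Fin C → ℝ by b i = max (v^C i) (v^N (r − r_C)) + ε for i < r_C and b i = 0 for i ≥ r_C, and let T be the multiset consisting of all N values v^N i together with all C bids b i. Then: (i) the (r+1)-th largest element of T equals v^N (r − r_C); and (ii) every bid b i with i < r_C is strictly greater than the (r+1)-th largest element of T. Consequently, in the VCG auction on these bids all r_C positive colluder bids win, the uniform price equals v^N (r − r_C), and the colluders' joint utility equals ∑_{i < r_C} v^C i − r_C · v^N (r − r_C). -/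
/-!
Let `p = vN (r - rC)`. The non-colluders at positions `≥ r - rC` and the `C - rC` zero bids are
all `≤ p`, while only the non-colluders at positions `> r - rC` can be `< p`: the `rC` positive
colluder bids exceed `p` by at least `ε`. So at most `N + C - (r + 1)` bids lie below `p` and
more than that many lie at or below it, which pins the `(r + 1)`-th largest bid down to `p`.
-/

/-- The `k`-th largest element (1-indexed) of a multiset of reals. -/
noncomputable def kthLargest (s : Multiset ℝ) (k : ℕ) : ℝ :=
  (s.sort (· ≤ ·)).getD (Multiset.card s - k) 0

open Finset

namespace List.Pairwise

variable {α : Type*} [LinearOrder α] {L : List α} {p : α} {j : ℕ}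

theorem getD_le_of_lt_countP (hL : L.Pairwise (· ≤ ·)) (d : α)
    (hj : j < L.countP (· ≤ p)) : L.getD j d ≤ p := by
  induction L generalizing j with
  | nil => simp at hj
  | cons a t ih =>
    rw [List.pairwise_cons] at hL
    by_cases hap : a ≤ p
    · cases j with
      | zero => simpa using hap
      | succ j => exact ih hL.2 (by simp [hap] at hj; omega)
    · have : t.countP (· ≤ p) = 0 :=
        List.countP_eq_zero.2 fun x hx hxp => hap ((hL.1 x hx).trans (by simpa using hxp))
      simp [hap, this] at hj

theorem le_getD_of_countP_le (hL : L.Pairwise (· ≤ ·)) (d : α) (hj : j < L.length)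
    (h : L.countP (· < p) ≤ j) : p ≤ L.getD j d := by
  induction L generalizing j with
  | nil => simp at hj
  | cons a t ih =>
    rw [List.pairwise_cons] at hL
    by_cases hap : a < p
    · cases j with
      | zero => simp [hap] at h
      | succ j =>
        exact ih hL.2 (by simpa using hj) (by simp [hap] at h; omega)
    · cases j with
      | zero => simpa using hap
      | succ j =>
        have : t.countP (· < p) = 0 :=
          List.countP_eq_zero.2 fun x hx hxp => hap ((hL.1 x hx).trans_lt (by simpa using hxp))
        exact ih hL.2 (by simpa using hj) (by omega)

end List.Pairwise

theorem kthLargest_eq_of_countP {s : Multiset ℝ} {k : ℕ} {p : ℝ}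
    (hlt : s.countP (· < p) ≤ Multiset.card s - k)
    (hle : Multiset.card s - k < s.countP (· ≤ p)) : kthLargest s k = p := by
  have hsort : ∀ q : ℝ → Prop, [DecidablePred q] →
      (s.sort (· ≤ ·)).countP (fun x => decide (q x)) = s.countP q := fun q _ => by
    rw [← Multiset.coe_countP, Multiset.sort_eq]
  have hlen : Multiset.card s - k < (s.sort (· ≤ ·)).length := by
    rw [Multiset.length_sort]
    exact hle.trans_le (Multiset.countP_le_card _ _)
  refine le_antisymm ?_ ?_
  · exact (s.pairwise_sort _).getD_le_of_lt_countP 0 (by rwa [hsort])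
  · exact (s.pairwise_sort _).le_getD_of_countP_le 0 hlen (by rwa [hsort])

namespace Fin

variable {n m : ℕ} {q : Fin n → Prop} [DecidablePred q]

theorem card_filter_le_val : #{i : Fin n | m ≤ (i : ℕ)} = n - m := by
  have hsplit := card_filter_add_card_filter_not (s := univ) (fun i : Fin n => (i : ℕ) < m)
  simp only [not_lt, card_univ, Fintype.card_fin, card_filter_val_lt] at hsplit
  omega

theorem sub_le_card_filter (h : ∀ i : Fin n, m ≤ (i : ℕ) → q i) : n - m ≤ #{i | q i} :=
  card_filter_le_val.symm.le.trans (card_le_card fun i hi => by simp_all)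

theorem card_filter_le_sub (h : ∀ i : Fin n, q i → m ≤ (i : ℕ)) : #{i | q i} ≤ n - m :=
  (card_le_card fun i hi => by simp_all).trans card_filter_le_val.le

end Fin

theorem Multiset.countP_map_univ {ι β : Type*} [Fintype ι] (f : ι → β) (q : β → Prop)
    [DecidablePred q] : (Multiset.map f univ.val).countP q = #{i | q (f i)} := by
  rw [Multiset.countP_map, ← Finset.filter_val, Finset.card_val]

theorem stmt_1_general (r rC N C : ℕ) (hrCC : rC ≤ C) (hrCr : rC ≤ r) (hrN : r - rC < N)
    (vN : Fin N → ℝ) (vC : Fin C → ℝ)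
    (hvN : Antitone vN)
    (hvNnn : ∀ i, 0 ≤ vN i)
    (ε : ℝ) (hε : 0 < ε)
    (b : Fin C → ℝ)
    (hb : ∀ i : Fin C,
      b i = if (i : ℕ) < rC then max (vC i) (vN ⟨r - rC, hrN⟩) + ε else 0)
    (T : Multiset ℝ)
    (hT : T = Multiset.map vN Finset.univ.val + Multiset.map b Finset.univ.val) :
    kthLargest T (r + 1) = vN ⟨r - rC, hrN⟩ ∧
    (∀ i : Fin C, (i : ℕ) < rC → kthLargest T (r + 1) < b i) ∧
    (∑ i : Fin rC, (vC (Fin.castLE hrCC i) - kthLargest T (r + 1))) =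
      (∑ i : Fin rC, vC (Fin.castLE hrCC i)) - rC * vN ⟨r - rC, hrN⟩ := by
  set p := vN ⟨r - rC, hrN⟩
  have hbid_gt : ∀ i : Fin C, (i : ℕ) < rC → p < b i := fun i hi => by
    rw [hb i, if_pos hi]
    linarith [le_max_right (vC i) p]
  have hcard : Multiset.card T = N + C := by simp [hT]
  have hle : N - (r - rC) + (C - rC) ≤ T.countP (· ≤ p) := by
    rw [hT, Multiset.countP_add, Multiset.countP_map_univ, Multiset.countP_map_univ]
    gcongr
    · exact Fin.sub_le_card_filter fun i hi => hvN (Fin.le_def.2 hi)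
    · exact Fin.sub_le_card_filter fun i hi => by rw [hb i, if_neg (by omega)]; exact hvNnn _
  have hlt : T.countP (· < p) ≤ N - (r - rC + 1) + (C - rC) := by
    rw [hT, Multiset.countP_add, Multiset.countP_map_univ, Multiset.countP_map_univ]
    gcongr
    · exact Fin.card_filter_le_sub fun i hi => by
        by_contra! h
        exact hi.not_ge (hvN (Fin.le_def.2 (Nat.le_of_lt_succ h)))
    · exact Fin.card_filter_le_sub fun i hi => by
        by_contra! h
        exact hi.not_gt (hbid_gt i h)
  have hk : kthLargest T (r + 1) = p := kthLargest_eq_of_countP (by omega) (by omega)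
  refine ⟨hk, fun i hi => hk ▸ hbid_gt i hi, ?_⟩
  rw [hk, Finset.sum_sub_distrib, Finset.sum_const, Finset.card_univ, Fintype.card_fin,
    nsmul_eq_mul]

/-- With the colluders' optimal bids (the top `rC` colluders bid
`max (vC i) (vN (r - rC)) + ε` and the rest bid `0`), in the combined multiset `T` of
all bids: (i) the `(r+1)`-th largest element of `T` equals `vN (r - rC)`; (ii) every
positive colluder bid strictly exceeds it; hence all `rC` positive colluder bids win,
the uniform price is `vN (r - rC)`, and the colluders' joint utility equals
`∑_{i < rC} vC i - rC * vN (r - rC)`. -/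
theorem stmt_1 (r rC N C : ℕ) (hrCC : rC ≤ C) (hrCr : rC ≤ r) (hrN : r - rC < N)
    (vN : Fin N → ℝ) (vC : Fin C → ℝ)
    (hvN : Antitone vN) (hvC : Antitone vC)
    (hvNnn : ∀ i, 0 ≤ vN i) (hvCnn : ∀ i, 0 ≤ vC i)
    (ε : ℝ) (hε : 0 < ε)
    (b : Fin C → ℝ)
    (hb : ∀ i : Fin C,
      b i = if (i : ℕ) < rC then max (vC i) (vN ⟨r - rC, hrN⟩) + ε else 0)
    (T : Multiset ℝ)
    (hT : T = Multiset.map vN Finset.univ.val + Multiset.map b Finset.univ.val) :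
    kthLargest T (r + 1) = vN ⟨r - rC, hrN⟩ ∧
    (∀ i : Fin C, (i : ℕ) < rC → kthLargest T (r + 1) < b i) ∧
    (∑ i : Fin rC, (vC (Fin.castLE hrCC i) - kthLargest T (r + 1))) =
      (∑ i : Fin rC, vC (Fin.castLE hrCC i)) - rC * vN ⟨r - rC, hrN⟩ :=
  stmt_1_general r rC N C hrCC hrCr hrN vN vC hvN hvNnn ε hε b hb T hT
end

section
/- Fix integers r_C* ≥ 0, r_N* ≥ 1, and Δ with 1 ≤ Δ ≤ r_N*, and set r = r_C* + r_N*. Let N, C be integers with r_N* < N and r_C* + Δ ≤ C. Let v^N : Fin N → ℝ and v^C : Fin C → ℝ be antitone with nonnegative values, and assume the split (r_C*, r_N*) is welfare-optimal in the sense that v^C r_C* ≤ v^N (r_N* − 1) (the (r_C*+1)-th largest colluding valuation is at most the r_N*-th largest non-colluding valuation). Then ∑_{i < r_C* + Δ} v^C i − (r_C* + Δ) · v^N (r_N* − Δ) ≤ ∑_{i < r_C*} v^C i − r_C* · v^N r_N*; that is, u_C(r_C* + Δ) ≤ u_C(r_C*): the colluders never benefit from taking more items than their welfare-optimal allocation.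 -/
/-- If the split `(rCs, rNs)` is welfare-optimal (the `(rCs+1)`-th largest colluding
valuation is at most the `rNs`-th largest non-colluding valuation), then the colluders
never benefit from taking `Δ` more items than their welfare-optimal allocation:
`u_C(rCs + Δ) ≤ u_C(rCs)`. -/
theorem stmt_2 (rCs rNs Δ N C : ℕ) (hΔ1 : 1 ≤ Δ) (hΔ2 : Δ ≤ rNs)
    (hN : rNs < N) (hC : rCs + Δ ≤ C)
    (vN : Fin N → ℝ) (vC : Fin C → ℝ)
    (hvN : Antitone vN) (hvC : Antitone vC)
    (hvNnn : ∀ i, 0 ≤ vN i) (hvCnn : ∀ i, 0 ≤ vC i)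
    (hopt : vC ⟨rCs, by omega⟩ ≤ vN ⟨rNs - 1, by omega⟩) :
    (∑ i : Fin (rCs + Δ), vC (Fin.castLE hC i))
        - ((rCs + Δ : ℕ) : ℝ) * vN ⟨rNs - Δ, by omega⟩ ≤
      (∑ i : Fin rCs, vC (Fin.castLE (by omega : rCs ≤ C) i))
        - (rCs : ℝ) * vN ⟨rNs, hN⟩ := by
  set a : ℝ := vN ⟨rNs - Δ, by omega⟩ with ha
  have h1 : vN ⟨rNs, hN⟩ ≤ a := hvN (Fin.mk_le_mk.mpr (by omega))
  set g : ℕ → ℝ := fun i => if h : i < C then vC ⟨i, h⟩ else 0 with hg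
  have e1 : (∑ i : Fin (rCs + Δ), vC (Fin.castLE hC i))
      = ∑ i ∈ Finset.range (rCs + Δ), g i := by
    rw [Finset.sum_range fun i => g i]
    apply Finset.sum_congr rfl
    intro i _
    simp only [hg]
    rw [dif_pos (by omega : (i : ℕ) < C)]
    rfl
  have e2 : (∑ i : Fin rCs, vC (Fin.castLE (by omega : rCs ≤ C) i))
      = ∑ i ∈ Finset.range rCs, g i := by
    rw [Finset.sum_range fun i => g i]
    apply Finset.sum_congr rfl
    intro i _
    simp only [hg]
    rw [dif_pos (by omega : (i : ℕ) < C)]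
    rfl
  have e3 : ∑ i ∈ Finset.range (rCs + Δ), g i
      = ∑ i ∈ Finset.range rCs, g i + ∑ i ∈ Finset.Ico rCs (rCs + Δ), g i := by
    rw [Finset.range_eq_Ico, Finset.range_eq_Ico]
    exact (Finset.sum_Ico_consecutive g (Nat.zero_le rCs) (by omega : rCs ≤ rCs + Δ)).symm
  have hbound : ∑ i ∈ Finset.Ico rCs (rCs + Δ), g i ≤ (Δ : ℝ) * a := by
    calc ∑ i ∈ Finset.Ico rCs (rCs + Δ), g i
        ≤ ∑ _i ∈ Finset.Ico rCs (rCs + Δ), a := by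
          apply Finset.sum_le_sum
          intro i hi
          simp only [Finset.mem_Ico] at hi
          have hiC : i < C := by omega
          simp only [hg]
          rw [dif_pos hiC]
          calc vC ⟨i, hiC⟩ ≤ vC ⟨rCs, by omega⟩ := hvC (Fin.mk_le_mk.mpr (by omega))
            _ ≤ vN ⟨rNs - 1, by omega⟩ := hopt
            _ ≤ a := hvN (Fin.mk_le_mk.mpr (by omega))
      _ = (Δ : ℝ) * a := by
          rw [Finset.sum_const, Nat.card_Ico]
          simp [nsmul_eq_mul]
  rw [e1, e2, e3]
  push_cast
  have hrCs : (rCs : ℝ) * vN ⟨rNs, hN⟩ ≤ (rCs : ℝ) * a := by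
    apply mul_le_mul_of_nonneg_left h1 (by positivity)
  linarith
end

section
/- Fix integers r < N and C ≥ 0, and let v^N : Fin N → ℝ and v^C : Fin C → ℝ be antitone with nonnegative values. For 0 ≤ a ≤ min(C, r) define u_C(a) = ∑_{i < a} v^C i − a · v^N (r − a) and W(a) = ∑_{i < a} v^C i + ∑_{i < r − a} v^N i. Let r_C* ∈ {0, …, min(C, r)} be a maximizer of W (the number of items won by colluders in the welfare-maximizing truthful VCG allocation). Then max_{0 ≤ a ≤ min(C, r)} u_C(a) = max_{0 ≤ a ≤ r_C*} u_C(a); in particular, u_C attains its maximum at some a ≤ r_C*, so colluders never obtain more items through collusion than under truthful bidding. -/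
/-- Let `uC a = ∑_{i<a} vC i - a * vN (r - a)` be the colluders' optimal joint utility
when winning `a` items, and `W a = ∑_{i<a} vC i + ∑_{i<r-a} vN i` the welfare of the
split giving `a` items to colluders. If `rCs` maximizes `W` over `{0,…,min C r}` (the
truthful VCG allocation to colluders), then the maximum of `uC` over `{0,…,min C r}`
equals its maximum over `{0,…,rCs}`; in particular `uC` attains its maximum at some
`a ≤ rCs`, so colluders never obtain more items through collusion than under truthful
bidding. -/
theorem stmt_3 (r N C : ℕ) (hrN : r < N)
    (vN : Fin N → ℝ) (vC : Fin C → ℝ)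
    (hvN : Antitone vN) (hvC : Antitone vC)
    (hvNnn : ∀ i, 0 ≤ vN i) (hvCnn : ∀ i, 0 ≤ vC i)
    (uC W : ℕ → ℝ)
    (huC : ∀ a : ℕ, uC a =
      (∑ i ∈ Finset.range a, if h : i < C then vC ⟨i, h⟩ else 0)
        - (a : ℝ) * vN ⟨r - a, lt_of_le_of_lt (Nat.sub_le r a) hrN⟩)
    (hWdef : ∀ a : ℕ, W a =
      (∑ i ∈ Finset.range a, if h : i < C then vC ⟨i, h⟩ else 0)
        + (∑ i ∈ Finset.range (r - a), if h : i < N then vN ⟨i, h⟩ else 0))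
    (rCs : ℕ) (hrCs : rCs ≤ min C r)
    (hmax : ∀ a ≤ min C r, W a ≤ W rCs) :
    (Finset.Icc 0 (min C r)).sup' (Finset.nonempty_Icc.mpr (Nat.zero_le _)) uC =
      (Finset.Icc 0 rCs).sup' (Finset.nonempty_Icc.mpr (Nat.zero_le _)) uC ∧
    ∃ a ≤ rCs, ∀ a' ≤ min C r, uC a' ≤ uC a := by
  have hrr : rCs ≤ r := le_trans hrCs (min_le_right _ _)
  have key : ∀ a, rCs ≤ a → a ≤ min C r → uC a ≤ uC rCs := by
    intro a hra ham
    have har : a ≤ r := le_trans ham (min_le_right _ _)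
    have hW := hmax a ham
    rw [hWdef a, hWdef rCs] at hW
    rw [huC a, huC rCs]
    set x : ℝ := vN ⟨r - a, lt_of_le_of_lt (Nat.sub_le r a) hrN⟩ with hx
    set y : ℝ := vN ⟨r - rCs, lt_of_le_of_lt (Nat.sub_le r rCs) hrN⟩ with hy
    have hyx : y ≤ x := hvN (by simp only [Fin.mk_le_mk]; omega)
    have hsub : r - a ≤ r - rCs := Nat.sub_le_sub_left hra r
    have hdiff : (∑ i ∈ Finset.range (r - rCs), if h : i < N then vN ⟨i, h⟩ else 0)
        = (∑ i ∈ Finset.range (r - a), if h : i < N then vN ⟨i, h⟩ else 0)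
          + ∑ i ∈ Finset.Ico (r - a) (r - rCs), if h : i < N then vN ⟨i, h⟩ else 0 := by
      rw [Finset.range_eq_Ico, Finset.range_eq_Ico]
      exact (Finset.sum_Ico_consecutive (fun i => if h : i < N then vN ⟨i, h⟩ else 0) (Nat.zero_le (r - a)) hsub).symm
    have hbound : (∑ i ∈ Finset.Ico (r - a) (r - rCs), if h : i < N then vN ⟨i, h⟩ else 0)
        ≤ ((a - rCs : ℕ) : ℝ) * x := by
      have : ∀ i ∈ Finset.Ico (r - a) (r - rCs),
          (if h : i < N then vN ⟨i, h⟩ else 0) ≤ x := by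
        intro i hi
        rw [Finset.mem_Ico] at hi
        have hiN : i < N := by omega
        rw [dif_pos hiN]
        exact hvN (by simp only [Fin.mk_le_mk]; omega)
      calc (∑ i ∈ Finset.Ico (r - a) (r - rCs), if h : i < N then vN ⟨i, h⟩ else 0)
          ≤ (Finset.Ico (r - a) (r - rCs)).card • x := Finset.sum_le_card_nsmul _ _ _ this
        _ = ((a - rCs : ℕ) : ℝ) * x := by
            rw [Nat.card_Ico, nsmul_eq_mul]
            congr 2
            omega
    have hcast : ((a - rCs : ℕ) : ℝ) = (a : ℝ) - (rCs : ℝ) := by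
      push_cast [Nat.cast_sub hra]; ring
    have hxnn : 0 ≤ x := hvNnn _
    have hry : (rCs : ℝ) * y ≤ (rCs : ℝ) * x :=
      mul_le_mul_of_nonneg_left hyx (Nat.cast_nonneg _)
    rw [hdiff] at hW
    rw [hcast] at hbound
    nlinarith [hbound, hW, hry]
  have hsubset : Finset.Icc 0 rCs ⊆ Finset.Icc 0 (min C r) := by
    apply Finset.Icc_subset_Icc_right hrCs
  have hne : (Finset.Icc 0 rCs).Nonempty := Finset.nonempty_Icc.mpr (Nat.zero_le _)
  have hle : (Finset.Icc 0 (min C r)).sup' (Finset.nonempty_Icc.mpr (Nat.zero_le _)) uC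
      ≤ (Finset.Icc 0 rCs).sup' hne uC := by
    apply Finset.sup'_le
    intro a ha
    rw [Finset.mem_Icc] at ha
    by_cases h : a ≤ rCs
    · exact Finset.le_sup' uC (Finset.mem_Icc.mpr ⟨Nat.zero_le _, h⟩)
    · exact le_trans (key a (le_of_not_ge h) ha.2)
        (Finset.le_sup' uC (Finset.mem_Icc.mpr ⟨Nat.zero_le _, le_refl _⟩))
  have hge : (Finset.Icc 0 rCs).sup' hne uC
      ≤ (Finset.Icc 0 (min C r)).sup' (Finset.nonempty_Icc.mpr (Nat.zero_le _)) uC :=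
    Finset.sup'_le _ _ fun a ha => Finset.le_sup' uC (hsubset ha)
  refine ⟨le_antisymm hle hge, ?_⟩
  obtain ⟨b, hb, hbeq⟩ := Finset.exists_mem_eq_sup' hne uC
  rw [Finset.mem_Icc] at hb
  refine ⟨b, hb.2, fun a' ha' => ?_⟩
  by_cases h : a' ≤ rCs
  · rw [← hbeq] at *
    exact Finset.le_sup' uC (Finset.mem_Icc.mpr ⟨Nat.zero_le _, h⟩)
  · refine le_trans (key a' (le_of_not_ge h) ha') ?_
    rw [← hbeq]
    exact Finset.le_sup' uC (Finset.mem_Icc.mpr ⟨Nat.zero_le _, le_refl _⟩)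
end

section
/- Fix integers r < N and C ≥ 0, and let v^N : Fin N → ℝ and v^C : Fin C → ℝ be antitone with nonnegative values. For 0 ≤ a ≤ min(C, r) define u_C(a) = ∑_{i < a} v^C i − a · v^N (r − a). If a ∈ {1, …, min(C, r)} is a maximizer of u_C over {0, …, min(C, r)}, then v^C i ≥ v^N (r − a) for every i < a; that is, at a collusive optimum every winning colluder values the item at least the resulting auction price, so the colluders need never bid above their true valuations (no bid loading). -/
/-!
Compare the optimum `a = b + 1` with `b` winners. The extra winner adds `vC b` to the
colluders' value, but the price rises from `vN (r - b)` to `vN (r - a)` for all `a` winners.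
Since `vN` is antitone the price does not fall, so optimality of `a` forces
`vN (r - a) ≤ vC b`, and `vC b ≤ vC i` for every earlier colluder `i`.
-/

theorem le_of_sub_mul_le_add_sub_mul {s x p q : ℝ} {b : ℕ} (hqp : q ≤ p)
    (h : s - b * q ≤ s + x - (b + 1) * p) : p ≤ x := by
  nlinarith [mul_le_mul_of_nonneg_left hqp (Nat.cast_nonneg (α := ℝ) b)]

theorem stmt_4_general (r N C : ℕ) (hrN : r < N)
    (vN : Fin N → ℝ) (vC : Fin C → ℝ)
    (hvN : Antitone vN) (hvC : Antitone vC)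
    (uC : ℕ → ℝ)
    (huC : ∀ a : ℕ, uC a =
      (∑ i ∈ Finset.range a, if h : i < C then vC ⟨i, h⟩ else 0)
        - (a : ℝ) * vN ⟨r - a, lt_of_le_of_lt (Nat.sub_le r a) hrN⟩)
    (a : ℕ) (ha1 : 1 ≤ a) (ha2 : a ≤ min C r)
    (hamax : ∀ a' ≤ min C r, uC a' ≤ uC a) :
    ∀ i : Fin C, (i : ℕ) < a →
      vN ⟨r - a, lt_of_le_of_lt (Nat.sub_le r a) hrN⟩ ≤ vC i := by
  obtain ⟨b, rfl⟩ : ∃ b, a = b + 1 := ⟨a - 1, by omega⟩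
  intro i hi
  have hbC : b < C := by omega
  have hgain := hamax b (by omega)
  rw [huC, huC, Finset.sum_range_succ, dif_pos hbC, Nat.cast_succ] at hgain
  have hprice : vN ⟨r - b, by omega⟩ ≤ vN ⟨r - (b + 1), by omega⟩ :=
    hvN (show r - (b + 1) ≤ r - b by omega)
  calc vN ⟨r - (b + 1), by omega⟩ ≤ vC ⟨b, hbC⟩ := le_of_sub_mul_le_add_sub_mul hprice hgain
    _ ≤ vC i := hvC (show (i : ℕ) ≤ b by omega)

/-- If `a ∈ {1,…,min C r}` maximizes the colluders' joint utility
`uC a = ∑_{i<a} vC i - a * vN (r - a)` over `{0,…,min C r}`, then every winning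
colluder values the item at least the resulting auction price `vN (r - a)`; hence the
colluders need never bid above their true valuations (no bid loading). -/
theorem stmt_4 (r N C : ℕ) (hrN : r < N)
    (vN : Fin N → ℝ) (vC : Fin C → ℝ)
    (hvN : Antitone vN) (hvC : Antitone vC)
    (hvNnn : ∀ i, 0 ≤ vN i) (hvCnn : ∀ i, 0 ≤ vC i)
    (uC : ℕ → ℝ)
    (huC : ∀ a : ℕ, uC a =
      (∑ i ∈ Finset.range a, if h : i < C then vC ⟨i, h⟩ else 0)
        - (a : ℝ) * vN ⟨r - a, lt_of_le_of_lt (Nat.sub_le r a) hrN⟩)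
    (a : ℕ) (ha1 : 1 ≤ a) (ha2 : a ≤ min C r)
    (hamax : ∀ a' ≤ min C r, uC a' ≤ uC a) :
    ∀ i : Fin C, (i : ℕ) < a →
      vN ⟨r - a, lt_of_le_of_lt (Nat.sub_le r a) hrN⟩ ≤ vC i :=
  stmt_4_general r N C hrN vN vC hvN hvC uC huC a ha1 ha2 hamax
end

section
/- Let A and B be finite multisets of real numbers and let r be a natural number with r ≤ card A + card B. Then the sum of the r largest elements of the multiset union A + B equals the maximum, over all natural numbers a with max(0, r − card B) ≤ a ≤ min(r, card A), of (sum of the a largest elements of A) + (sum of the (r − a) largest elements of B). -/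
/-- The sum of the `r` largest elements of a multiset of reals. -/
noncomputable def topSum (s : Multiset ℝ) (r : ℕ) : ℝ :=
  (((s.sort (· ≤ ·)).drop (Multiset.card s - r)).sum)

lemma key_list (x : ℝ) : ∀ (l : List ℝ) (r : ℕ), r ≤ l.length →
    ((l.drop (l.length - r)).sum : ℝ) ≤
      ((List.orderedInsert (· ≤ ·) x l).drop (l.length + 1 - r)).sum := by
  intro l
  induction l with
  | nil =>
    intro r hr
    have : r = 0 := by simpa using hr
    subst this; simp
  | cons b t ih =>
    intro r hr
    simp only [List.orderedInsert]
    by_cases hxb : x ≤ b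
    · simp only [if_pos hxb]
      rcases Nat.lt_or_ge r (t.length + 1) with hcase | hcase
      · have h1 : (b :: t).length - r = (t.length - r) + 1 := by simp; omega
        have h2 : (b :: t).length + 1 - r = (t.length - r) + 2 := by simp; omega
        rw [h1, h2]
        simp [List.drop_succ_cons]
      · have hreq : r = t.length + 1 := by simp at hr; omega
        subst hreq
        have h1 : (b :: t).length - (t.length + 1) = 0 := by simp
        have h2 : (b :: t).length + 1 - (t.length + 1) = 1 := by simp
        rw [h1, h2]
        simp
    · simp only [if_neg hxb]
      have hbx : b ≤ x := le_of_not_ge hxb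
      rcases Nat.lt_or_ge r (t.length + 1) with hcase | hcase
      · have h1 : (b :: t).length - r = (t.length - r) + 1 := by simp; omega
        have h2 : (b :: t).length + 1 - r = (t.length + 1 - r) + 1 := by simp; omega
        rw [h1, h2, List.drop_succ_cons, List.drop_succ_cons]
        exact ih r (by omega)
      · have hreq : r = t.length + 1 := by simp at hr; omega
        subst hreq
        have h1 : (b :: t).length - (t.length + 1) = 0 := by simp
        have h2 : (b :: t).length + 1 - (t.length + 1) = 1 := by simp
        rw [h1, h2, List.drop_succ_cons, List.drop_zero, List.drop_zero]
        have hperm : (List.orderedInsert (· ≤ ·) x t).Perm (x :: t) :=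
          List.perm_orderedInsert _ x t
        have hsum : (List.orderedInsert (· ≤ ·) x t).sum = x + t.sum := by
          rw [hperm.sum_eq]; simp
        rw [List.sum_cons, hsum]
        linarith

lemma sort_cons (x : ℝ) (s : Multiset ℝ) :
    (x ::ₘ s).sort (· ≤ ·) = List.orderedInsert (· ≤ ·) x (s.sort (· ≤ ·)) := by
  have hperm : ((x ::ₘ s).sort (· ≤ ·)).Perm (List.orderedInsert (· ≤ ·) x (s.sort (· ≤ ·))) := by
    have h1 : ((x ::ₘ s).sort (· ≤ ·) : Multiset ℝ) = x ::ₘ s := Multiset.sort_eq _ _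
    have h2 : (↑(List.orderedInsert (· ≤ ·) x (s.sort (· ≤ ·))) : Multiset ℝ) = x ::ₘ s := by
      have := (List.perm_orderedInsert (· ≤ ·) x (s.sort (· ≤ ·)))
      calc (↑(List.orderedInsert (· ≤ ·) x (s.sort (· ≤ ·))) : Multiset ℝ)
          = ↑(x :: s.sort (· ≤ ·)) := Quot.sound this
        _ = x ::ₘ s := by rw [← Multiset.cons_coe, Multiset.sort_eq]
    exact Multiset.coe_eq_coe.mp (h1.trans h2.symm)
  exact List.Perm.eq_of_pairwise' (r := (· ≤ ·)) (Multiset.pairwise_sort _ _)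
    ((Multiset.pairwise_sort s (· ≤ ·)).orderedInsert x _) hperm

lemma topSum_le_cons (s : Multiset ℝ) (x : ℝ) (r : ℕ) (hr : r ≤ Multiset.card s) :
    topSum s r ≤ topSum (x ::ₘ s) r := by
  unfold topSum
  rw [sort_cons, Multiset.card_cons]
  have hlen : (s.sort (· ≤ ·)).length = Multiset.card s := Multiset.length_sort _
  have := key_list x (s.sort (· ≤ ·)) r (by rw [hlen]; exact hr)
  rw [hlen] at this
  exact this

lemma topSum_mono (t s : Multiset ℝ) (hts : t ≤ s) (r : ℕ) (hr : r ≤ Multiset.card t) :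
    topSum t r ≤ topSum s r := by
  obtain ⟨u, rfl⟩ := Multiset.le_iff_exists_add.mp hts
  induction u using Multiset.induction with
  | empty => simp
  | cons x u ih =>
    calc topSum t r ≤ topSum (t + u) r := ih (Multiset.le_add_right _ _)
      _ ≤ topSum (x ::ₘ (t + u)) r := topSum_le_cons _ x r (by simp; omega)
      _ = topSum (t + (x ::ₘ u)) r := by rw [Multiset.add_cons]

lemma topSum_card (t : Multiset ℝ) : topSum t (Multiset.card t) = t.sum := by
  unfold topSum
  rw [Nat.sub_self, List.drop_zero, ← Multiset.sum_coe, Multiset.sort_eq]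

lemma sum_le_topSum (t s : Multiset ℝ) (hts : t ≤ s) : t.sum ≤ topSum s (Multiset.card t) := by
  rw [← topSum_card t]
  exact topSum_mono t s hts _ le_rfl

lemma exists_topSum (s : Multiset ℝ) (r : ℕ) (hr : r ≤ Multiset.card s) :
    ∃ t : Multiset ℝ, t ≤ s ∧ Multiset.card t = r ∧ t.sum = topSum s r := by
  refine ⟨↑((s.sort (· ≤ ·)).drop (Multiset.card s - r)), ?_, ?_, ?_⟩
  · conv_rhs => rw [← Multiset.sort_eq s (· ≤ ·)]
    exact Multiset.coe_le.mpr (List.drop_sublist _ _).subperm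
  · simp [Multiset.length_sort]; omega
  · simp [topSum, Multiset.sum_coe]

/-- The sum of the `r` largest elements of the multiset union `A + B` equals the
maximum, over all `a` with `max 0 (r - card B) ≤ a ≤ min r (card A)`, of the sum of
the `a` largest elements of `A` plus the sum of the `r - a` largest elements of `B`. -/
theorem stmt_7 (A B : Multiset ℝ) (r : ℕ) (h : r ≤ Multiset.card A + Multiset.card B) :
    topSum (A + B) r =
      (Finset.Icc (r - Multiset.card B) (min r (Multiset.card A))).sup'
        (Finset.nonempty_Icc.mpr (by omega))
        (fun a => topSum A a + topSum B (r - a)) := by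
  apply le_antisymm
  · obtain ⟨t, hts, hcard, hsum⟩ := exists_topSum (A + B) r (by simpa using h)
    have hdecomp : (t - B) + (t ∩ B) = t := Multiset.sub_add_inter t B
    have hA : t - B ≤ A := by
      rw [Multiset.sub_le_iff_le_add]
      exact hts
    have hB : t ∩ B ≤ B := Multiset.inter_le_right
    have hcA : Multiset.card (t - B) ≤ Multiset.card A := Multiset.card_le_card hA
    have hcB : Multiset.card (t ∩ B) ≤ Multiset.card B := Multiset.card_le_card hB
    have hsplit : Multiset.card (t - B) + Multiset.card (t ∩ B) = r := by
      rw [← Multiset.card_add, hdecomp, hcard]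
    set a := Multiset.card (t - B) with ha
    have hmem : a ∈ Finset.Icc (r - Multiset.card B) (min r (Multiset.card A)) := by
      rw [Finset.mem_Icc]; omega
    have h1 : (t - B).sum ≤ topSum A a := sum_le_topSum (t - B) A hA
    have h2 : (t ∩ B).sum ≤ topSum B (r - a) := by
      have hc : Multiset.card (t ∩ B) = r - a := by omega
      rw [← hc]; exact sum_le_topSum (t ∩ B) B hB
    calc topSum (A + B) r = t.sum := hsum.symm
      _ = (t - B).sum + (t ∩ B).sum := by rw [← Multiset.sum_add, hdecomp]
      _ ≤ topSum A a + topSum B (r - a) := add_le_add h1 h2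
      _ ≤ _ := Finset.le_sup' (fun a => topSum A a + topSum B (r - a)) hmem
  · apply Finset.sup'_le
    intro a ha
    rw [Finset.mem_Icc] at ha
    obtain ⟨tA, hA, hcA, hsA⟩ := exists_topSum A a (by omega)
    obtain ⟨tB, hB, hcB, hsB⟩ := exists_topSum B (r - a) (by omega)
    have hle : tA + tB ≤ A + B := add_le_add hA hB
    have hkey := sum_le_topSum (tA + tB) (A + B) hle
    rw [Multiset.card_add, hcA, hcB] at hkey
    have har : a + (r - a) = r := by omega
    rw [har] at hkey
    rw [← hsA, ← hsB, ← Multiset.sum_add]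
    exact hkey
end

section
/- Let M, r be naturals with r ≤ M, let v, b : Fin M → ℝ satisfy 0 ≤ b i ≤ v i for every i, let S ⊆ Fin M be a subset with b i = v i for all i ∈ S, and let W ⊆ Fin M with card W = r consist of r highest bids, i.e. b j ≥ b i for all j ∈ W and i ∉ W. Then ∑_{i ∈ W} v i ≥ (sum of the min(r, card S) largest values among the family (v i)_{i ∈ S}). In particular, in a VCG auction on all M bidders in which the bidders in S (the non-colluders) bid truthfully and the remaining (colluding) bidders bid at most their true valuations, the realized social welfare is at least the welfare of running VCG on the bidders in S alone (a Bulow–Klemperer type result: adding colluding bidders cannot decrease welfare). -/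
/-- Bulow–Klemperer type result for welfare: in a VCG auction on all `M` bidders in
which the bidders in `S` (the non-colluders) bid truthfully and the remaining
(colluding) bidders bid at most their true valuations, the realized social welfare
`∑_{i ∈ W} v i` (where `W` is a set of `r` highest bids) is at least the welfare of
running VCG on the bidders in `S` alone, i.e. the sum of the `min r (card S)` largest
values among `(v i)_{i ∈ S}`. -/
theorem stmt_8 (M r : ℕ) (hr : r ≤ M) (v b : Fin M → ℝ)
    (hb0 : ∀ i, 0 ≤ b i) (hbv : ∀ i, b i ≤ v i)
    (S : Finset (Fin M)) (hS : ∀ i ∈ S, b i = v i)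
    (W : Finset (Fin M)) (hW : W.card = r)
    (hWtop : ∀ j ∈ W, ∀ i ∉ W, b i ≤ b j) :
    topSum (Multiset.map v S.val) (min r S.card) ≤ ∑ i ∈ W, v i := by
  classical
  set k := min r S.card with hk
  set vle : Fin M → Fin M → Bool := fun a c => decide (v a ≤ v c) with hvle
  set l := (S.val.toList).mergeSort vle with hl
  have hperm : List.Perm l S.val.toList := List.mergeSort_perm _ _
  have hlperm : (l : Multiset (Fin M)) = S.val := by
    rw [Multiset.coe_eq_coe.2 hperm, Multiset.coe_toList]
  have hlsorted : l.Pairwise (fun a c => vle a c) := by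
    apply List.pairwise_mergeSort
    · intro a c d h1 h2
      simp only [hvle, decide_eq_true_eq] at *
      exact le_trans h1 h2
    · intro a c
      simp only [hvle, Bool.or_eq_true, decide_eq_true_eq]
      exact le_total _ _
  have hmapsorted : (l.map v).Pairwise (· ≤ ·) := by
    rw [List.pairwise_map]
    exact hlsorted.imp (fun h => by simpa [hvle] using h)
  have hsort_eq : (Multiset.map v S.val).sort (· ≤ ·) = l.map v := by
    apply List.Perm.eq_of_pairwise' (Multiset.pairwise_sort _ _) hmapsorted
    rw [← Multiset.coe_eq_coe, Multiset.sort_eq, ← hlperm]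
    rfl
  have hlen : l.length = S.card := by
    have := congrArg Multiset.card hlperm
    simpa using this
  have hkS : k ≤ S.card := min_le_right _ _
  set d := S.card - k with hd
  -- the top-k subset T of S
  have hnodupl : l.Nodup := by
    have : (l : Multiset (Fin M)).Nodup := hlperm ▸ S.nodup
    simpa using this
  have hsub : (l.drop d).Sublist l := List.drop_sublist d l
  set T : Finset (Fin M) := ⟨(l.drop d : List (Fin M)), by
    exact (Multiset.coe_nodup).2 (hsub.nodup hnodupl)⟩ with hT
  have hTS : T ⊆ S := by
    intro x hx
    have hxl : x ∈ l := hsub.mem (by simpa [hT, Finset.mem_def] using hx)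
    have : x ∈ (l : Multiset (Fin M)) := by simpa using hxl
    rw [hlperm] at this
    exact this
  have hTcard : T.card = k := by
    have : T.card = l.length - d := by
      simp [hT, Finset.card, List.length_drop]
    rw [this, hlen, hd]
    omega
  have hTsum : topSum (Multiset.map v S.val) k = ∑ i ∈ T, v i := by
    have hcard : Multiset.card (Multiset.map v S.val) = S.card := by simp
    rw [topSum, hsort_eq, hcard, ← List.map_drop]
    rw [Finset.sum]
    simp [hT]
    rfl
  rw [hTsum]
  -- now compare ∑_T v with ∑_W v
  rcases W.eq_empty_or_nonempty with hWe | hWne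
  · have hr0 : r = 0 := by rw [← hW, hWe]; simp
    have hk0 : k = 0 := by simp [hk, hr0]
    have : T = ∅ := Finset.card_eq_zero.1 (by rw [hTcard, hk0])
    simp [this, hWe]
  · set m := W.inf' hWne b with hm
    have hm0 : 0 ≤ m := Finset.le_inf' hWne b fun j _ => hb0 j
    have hout : ∀ i ∉ W, b i ≤ m :=
      fun i hi => Finset.le_inf' hWne b fun j hj => hWtop j hj i hi
    have hcard1 : (T \ W).card + (T ∩ W).card = T.card := Finset.card_sdiff_add_card_inter T W
    have hcard2 : (W \ T).card + (W ∩ T).card = W.card := Finset.card_sdiff_add_card_inter W T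
    have hic : (T ∩ W).card = (W ∩ T).card := by rw [Finset.inter_comm]
    have hkr : k ≤ r := min_le_left _ _
    have hcardTW : (T \ W).card ≤ (W \ T).card := by omega
    have h1 : ∑ i ∈ T \ W, v i ≤ (T \ W).card • m := by
      apply Finset.sum_le_card_nsmul
      intro i hi
      rw [Finset.mem_sdiff] at hi
      rw [← hS i (hTS hi.1)]
      exact hout i hi.2
    have h2 : ((T \ W).card : ℝ) • m ≤ ((W \ T).card : ℝ) • m := by
      rw [smul_eq_mul, smul_eq_mul]
      exact mul_le_mul_of_nonneg_right (Nat.cast_le.2 hcardTW) hm0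
    have h3 : (W \ T).card • m ≤ ∑ j ∈ W \ T, b j := by
      apply Finset.card_nsmul_le_sum
      intro j hj
      exact Finset.inf'_le b (Finset.mem_sdiff.1 hj).1
    have h4 : ∑ j ∈ W \ T, b j ≤ ∑ j ∈ W \ T, v j :=
      Finset.sum_le_sum fun j _ => hbv j
    have e1 : ∑ i ∈ T ∩ W, v i + ∑ i ∈ T \ W, v i = ∑ i ∈ T, v i :=
      Finset.sum_inter_add_sum_sdiff T W v
    have e2 : ∑ i ∈ W ∩ T, v i + ∑ i ∈ W \ T, v i = ∑ i ∈ W, v i :=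
      Finset.sum_inter_add_sum_sdiff W T v
    have e3 : ∑ i ∈ T ∩ W, v i = ∑ i ∈ W ∩ T, v i := by rw [Finset.inter_comm]
    have hns1 : (T \ W).card • m = ((T \ W).card : ℝ) • m := by
      rw [smul_eq_mul, nsmul_eq_mul]
    have hns2 : (W \ T).card • m = ((W \ T).card : ℝ) • m := by
      rw [smul_eq_mul, nsmul_eq_mul]
    rw [hns1] at h1
    rw [hns2] at h3
    linarith
end

section
/- Let p ∈ ℝ, let m, C be naturals, and let v : Fin C → ℝ be antitone (listed in descending order). For every subset W ⊆ Fin C with card W ≤ m, ∑_{i ∈ W} (v i − p) ≤ ∑_{i < min(m, C)} max (v i − p) 0. Moreover, equality is attained by the set W = {i : i < min(m, card {i : v i > p})} of the highest-valued bidders whose value exceeds p. Consequently, under a posted price p with capacity m, truthful bidding maximizes the colluders' joint utility, so the posted-price phase of the Hybrid-VCG mechanism is incentive compatible for the colluding group. -/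
/-!
Clipping each term at zero can only increase the colluders' utility, and since
`i ↦ max (v i - p) 0` is antitone, its sum over any set `W` of winners is dominated by its sum
over the first `#W ≤ m` indices. The bidders above the price form an initial segment
`{i | i < t}`, so among the first `min m C` indices the clipped terms equal `v i - p` on the
first `min m t` of them and vanish afterwards: the bound is attained.
-/

open Finset

namespace Fin

variable {n : ℕ}

theorem filter_val_lt_succ {k : ℕ} (hk : k < n) :
    univ.filter (fun i : Fin n => (i : ℕ) < k + 1) =
      insert ⟨k, hk⟩ (univ.filter fun i : Fin n => (i : ℕ) < k) := by
  ext i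
  simp only [mem_filter, mem_univ, true_and, mem_insert, Fin.ext_iff]
  omega

theorem map_castLEEmb_univ {k : ℕ} (h : k ≤ n) :
    univ.map (castLEEmb h) = univ.filter fun i : Fin n => (i : ℕ) < k := by
  ext i
  simp only [mem_filter, mem_univ, true_and, mem_map, castLEEmb_apply]
  exact ⟨by rintro ⟨j, -, rfl⟩; exact j.isLt, fun hi => ⟨⟨i, hi⟩, rfl⟩⟩

theorem sum_castLE_eq_sum_filter_val_lt {β : Type*} [AddCommMonoid β] {k : ℕ} (h : k ≤ n)
    (f : Fin n → β) : ∑ i : Fin k, f (castLE h i) = ∑ i ∈ {i : Fin n | (i : ℕ) < k}, f i := by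
  rw [← map_castLEEmb_univ h, sum_map]
  rfl

section OrderedSum

variable {β : Type*} [AddCommMonoid β] [PartialOrder β] [IsOrderedAddMonoid β]

theorem sum_le_sum_filter_val_lt_card {f : Fin n → β} (hf : Antitone f) (s : Finset (Fin n)) :
    ∑ i ∈ s, f i ≤ ∑ i ∈ {i : Fin n | (i : ℕ) < #s}, f i := by
  induction s using Finset.induction_on_max with
  | empty => simp
  | insert a s hlt ih =>
    have hcard : #s ≤ a := by
      simpa using card_le_card (fun i hi => mem_Iio.2 (hlt i hi))
    have ha : a ∉ s := fun h => lt_irrefl a (hlt a h)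
    rw [sum_insert ha, card_insert_of_notMem ha, filter_val_lt_succ (hcard.trans_lt a.isLt),
      sum_insert (by simp)]
    exact add_le_add (hf (show (⟨#s, _⟩ : Fin n) ≤ a from hcard)) ih

end OrderedSum

theorem val_lt_card_filter_lt_iff_of_antitone {α : Type*} [Preorder α] [DecidableLT α]
    {v : Fin n → α} (hv : Antitone v) (p : α) (i : Fin n) :
    (i : ℕ) < #{j : Fin n | p < v j} ↔ p < v i :=
  lt_card_filter_univ_iff_apply_of_imp _ fun _ _ hji h => h.trans_le (hv hji)

end Fin

open Fin

/-- Under a posted price `p` with capacity `m`, for any set `W` of at most `m` winners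
the colluders' joint utility `∑_{i ∈ W} (v i - p)` is at most
`∑_{i < min m C} max (v i - p) 0`, and this bound is attained by the set of the
highest-valued bidders whose value exceeds `p`; hence truthful bidding maximizes the
colluders' joint utility in the posted-price phase of the Hybrid-VCG mechanism. -/
theorem stmt_10 (p : ℝ) (m C : ℕ) (v : Fin C → ℝ) (hv : Antitone v) :
    (∀ W : Finset (Fin C), W.card ≤ m →
      ∑ i ∈ W, (v i - p) ≤
        ∑ i : Fin (min m C), max (v (Fin.castLE (min_le_right m C) i) - p) 0) ∧
    ((Finset.univ.filter (fun i : Fin C =>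
        (i : ℕ) < min m (Finset.univ.filter (fun j : Fin C => p < v j)).card)).card
          ≤ m ∧
      ∑ i ∈ Finset.univ.filter (fun i : Fin C =>
          (i : ℕ) < min m (Finset.univ.filter (fun j : Fin C => p < v j)).card),
          (v i - p) =
        ∑ i : Fin (min m C), max (v (Fin.castLE (min_le_right m C) i) - p) 0) := by
  set t := #{j : Fin C | p < v j}
  have ht (i : Fin C) : (i : ℕ) < t ↔ p < v i := val_lt_card_filter_lt_iff_of_antitone hv p i
  have hx : Antitone fun i => max (v i - p) 0 :=
    fun i j hij => max_le_max_right 0 (sub_le_sub_right (hv hij) p)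
  rw [sum_castLE_eq_sum_filter_val_lt _ fun i => max (v i - p) 0]
  refine ⟨fun W hW => ?_, by rw [card_filter_val_lt]; omega, ?_⟩
  · calc ∑ i ∈ W, (v i - p) ≤ ∑ i ∈ W, max (v i - p) 0 := sum_le_sum fun i _ => le_max_left _ _
      _ ≤ ∑ i ∈ {i : Fin C | (i : ℕ) < #W}, max (v i - p) 0 := sum_le_sum_filter_val_lt_card hx W
      _ ≤ ∑ i ∈ {i : Fin C | (i : ℕ) < min m C}, max (v i - p) 0 := by
        refine sum_le_sum_of_subset_of_nonneg (monotone_filter_right _ fun i hi => ?_)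
          fun _ _ _ => le_max_right _ _
        have := i.isLt
        omega
  · have hclip (i : Fin C) : max (v i - p) 0 = if p < v i then v i - p else 0 := by
      split_ifs with h
      · exact max_eq_left (sub_nonneg.2 h.le)
      · exact max_eq_right (sub_nonpos.2 (not_lt.1 h))
    simp only [hclip, ← sum_filter, filter_filter]
    congr 1
    ext i
    simp only [mem_filter, mem_univ, true_and, ← ht]
    have := i.isLt
    omega
end

section
/- Let N, C ≥ 1 and let k, r be naturals with k + 1 ≤ N and k ≤ r. Let μ be the product over Fin N ⊕ Fin C (equivalently Fin (N + C)) of the uniform probability measure on [0,1], writing a sample point as (X, Y) with X : Fin N → ℝ and Y : Fin C → ℝ, and let X_{(k+1)} denote the (k+1)-th largest coordinate of X. Then μ {(X, Y) : card {j : Y j > X_{(k+1)}} ≥ r − k} = ∑_{q = r−k}^{C} (C choose q) · B(C + N − k − q, q + k + 1) / B(N − k, k + 1), where B(a, b) = ∫_0^1 t^{a−1} (1 − t)^{b−1} dt is the Beta function. (This is the probability P(k) that all r − k items reserved for the colluding bidders are sold in the Hybrid-VCG mechanism when all N + C valuations are i.i.d. with a continuous strictly increasing distribution.) -/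
open MeasureTheory Set

/-- The Euler Beta function `B(a, b) = ∫_0^1 t^(a-1) (1-t)^(b-1) dt` for natural
arguments. -/
noncomputable def betaFn (a b : ℕ) : ℝ :=
  ∫ t in (0 : ℝ)..1, t ^ (a - 1) * (1 - t) ^ (b - 1)

/-! ### Beta function facts -/

lemma Jval (a b : ℕ) : ∫ t in (0:ℝ)..1, t ^ a * (1 - t) ^ b
    = (a.factorial * b.factorial : ℝ) / (a + b + 1).factorial := by
  induction b generalizing a with
  | zero =>
    simp only [pow_zero, mul_one, integral_pow, one_pow, zero_pow (Nat.succ_ne_zero a), sub_zero]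
    rw [Nat.factorial_succ]
    push_cast
    rw [eq_div_iff (by positivity)]
    field_simp
    simp
  | succ b ih =>
    have hparts := intervalIntegral.integral_mul_deriv_eq_deriv_mul
      (u := fun t : ℝ => (1 - t) ^ (b + 1)) (u' := fun t : ℝ => -((b+1) * (1 - t) ^ b))
      (v := fun t : ℝ => t ^ (a + 1) / (a + 1)) (v' := fun t : ℝ => t ^ a)
      (a := (0:ℝ)) (b := 1)
      (fun x _ => by
        have : HasDerivAt (fun t : ℝ => (1 - t) ^ (b + 1))
            (((b:ℝ)+1) * (1 - x) ^ b * (-1)) x := by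
          exact (HasDerivAt.fun_pow ((hasDerivAt_id x).const_sub 1) (b+1)).congr_deriv
            (by simp only [id_eq]; push_cast; ring)
        simpa using this.congr_deriv (by ring)
      )
      (fun x _ => by
        have : HasDerivAt (fun t : ℝ => t ^ (a + 1) / (a + 1))
            (((a:ℝ)+1) * x ^ a / (a+1)) x :=
          (hasDerivAt_pow (a+1) x).div_const _ |>.congr_deriv (by push_cast; ring)
        exact this.congr_deriv (by field_simp)
      )
      (by apply Continuous.intervalIntegrable; continuity)
      (by apply Continuous.intervalIntegrable; continuity)
    have h2 : (∫ t in (0:ℝ)..1, (1 - t) ^ (b+1) * t ^ a)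
        = ((b:ℝ)+1)/((a:ℝ)+1) * ∫ t in (0:ℝ)..1, t ^ (a+1) * (1 - t) ^ b := by
      rw [hparts]
      simp only [one_pow, zero_pow, Nat.succ_ne_zero]
      rw [show (∫ x in (0:ℝ)..1, -(((b:ℝ)+1) * (1 - x) ^ b) * (x ^ (a+1) / (a+1)))
          = -(((b:ℝ)+1)/((a:ℝ)+1)) * ∫ t in (0:ℝ)..1, t ^ (a+1) * (1 - t) ^ b by
        rw [← intervalIntegral.integral_const_mul]
        congr 1; ext x; field_simp]
      ring
    rw [show (fun t : ℝ => t ^ a * (1-t)^(b+1)) = fun t : ℝ => (1-t)^(b+1) * t ^ a from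
      by ext t; ring] at *
    rw [h2, ih (a+1)]
    rw [show a+1+b+1 = (a+b+1)+1 from by ring, show a+(b+1)+1 = (a+b+1)+1 from by ring,
      Nat.factorial_succ (a+b+1), Nat.factorial_succ b, Nat.factorial_succ a]
    push_cast
    have h1 : ((a:ℝ)+1) ≠ 0 := by positivity
    have h3 : ((a:ℝ)+(b:ℝ)+1+1) ≠ 0 := by positivity
    field_simp

lemma betaFn_succ (a b : ℕ) :
    betaFn (a+1) (b+1) = (a.factorial * b.factorial : ℝ) / (a + b + 1).factorial := by
  rw [betaFn]
  simp only [Nat.add_sub_cancel]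
  exact Jval a b

lemma betaFn_nonneg (a b : ℕ) : 0 ≤ betaFn a b :=
  intervalIntegral.integral_nonneg zero_le_one fun t ht =>
    mul_nonneg (pow_nonneg ht.1 _) (pow_nonneg (by linarith [ht.2]) _)

lemma key_id {N k : ℕ} (h : k + 1 ≤ N) :
    (N : ℝ) * ((N-1).choose k) * betaFn (N-k) (k+1) = 1 := by
  obtain ⟨m, hm⟩ : ∃ m, N - k = m + 1 := ⟨N-k-1, by omega⟩
  rw [hm, betaFn_succ m k]
  have h1 : m + k + 1 = N := by omega
  have h2 : N - 1 = m + k := by omega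
  rw [h2, ← h1]
  have hch : ((m+k).choose k : ℝ) = ((m+k).factorial : ℝ) / (k.factorial * m.factorial) := by
    rw [Nat.cast_choose ℝ (Nat.le_add_left k m), show m + k - k = m from by omega]
  rw [hch, Nat.factorial_succ (m+k)]
  have hk0 : (k.factorial : ℝ) ≠ 0 := Nat.cast_ne_zero.mpr (Nat.factorial_ne_zero _)
  have hm0 : (m.factorial : ℝ) ≠ 0 := Nat.cast_ne_zero.mpr (Nat.factorial_ne_zero _)
  have hmk0 : ((m+k).factorial : ℝ) ≠ 0 := Nat.cast_ne_zero.mpr (Nat.factorial_ne_zero _)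
  have hmk1 : ((m:ℝ)+(k:ℝ)+1) ≠ 0 := by positivity
  push_cast
  field_simp

/-! ### Sorting: identification of the k-th largest element -/

lemma countP_sorted_ge {l : List ℝ} (hl : l.Pairwise (· ≤ ·)) {m : ℕ} (hm : m < l.length)
    (p : ℝ → Bool) (hp : ∀ x y, x ≤ y → p y → p x) (hpm : p (l.get ⟨m, hm⟩)) :
    m + 1 ≤ l.countP p := by
  have h1 : l.countP p = (l.take (m+1)).countP p + (l.drop (m+1)).countP p := by
    rw [← List.countP_append, List.take_append_drop]
  have h2 : (l.take (m+1)).countP p = (l.take (m+1)).length := by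
    rw [List.countP_eq_length]
    intro x hx
    rw [List.mem_take_iff_getElem] at hx
    obtain ⟨j, hj, rfl⟩ := hx
    have hjm : j ≤ m := by omega
    exact hp _ _ (hl.rel_get_of_le (a := ⟨j, by omega⟩) (b := ⟨m, hm⟩) hjm) hpm
  rw [h1, h2, List.length_take]
  omega

lemma kthLargest_eq {n : ℕ} (X : Fin n → ℝ) (i : Fin n) (A : Finset (Fin n)) (hiA : i ∉ A)
    (hA : ∀ j ∈ A, X i < X j) (hA' : ∀ j, j ∉ A → j ≠ i → X j < X i) :
    kthLargest (Multiset.map X Finset.univ.val) (A.card + 1) = X i := by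
  classical
  set M : Multiset ℝ := Multiset.map X Finset.univ.val with hM
  have hcard : Multiset.card M = n := by simp [hM]
  set l := M.sort (· ≤ ·) with hldef
  have hlen : l.length = n := by rw [hldef, Multiset.length_sort, hcard]
  have hsorted : l.Pairwise (· ≤ ·) := M.pairwise_sort _
  set k := A.card with hk
  have hkn : k + 1 ≤ n := by
    have : A ⊆ Finset.univ.erase i := fun j hj =>
      Finset.mem_erase.mpr ⟨fun h => hiA (h ▸ hj), Finset.mem_univ _⟩
    have h1 := Finset.card_le_card this
    rw [Finset.card_erase_of_mem (Finset.mem_univ i), Finset.card_univ, Fintype.card_fin] at h1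
    have := i.pos
    omega
  have hm : n - (k+1) < l.length := by omega
  have hcount_lt : l.countP (fun x => decide (x < X i)) = n - (k+1) := by
    have e1 : (l.countP fun x => decide (x < X i)) = Multiset.countP (fun x => x < X i) M := by
      conv_rhs => rw [← Multiset.sort_eq M (fun x1 x2 : ℝ => x1 ≤ x2), Multiset.coe_countP]
    rw [e1, hM, Multiset.countP_map]
    rw [show (Multiset.filter (fun j => X j < X i) Finset.univ.val)
        = (Finset.univ.filter fun j => X j < X i).val from (Finset.filter_val _ _).symm]
    rw [show Multiset.card (Finset.univ.filter fun j => X j < X i).val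
        = (Finset.univ.filter fun j => X j < X i).card from rfl]
    have hset : (Finset.univ.filter fun j => X j < X i) = Finset.univ \ (insert i A) := by
      ext j
      simp only [Finset.mem_filter, Finset.mem_univ, true_and, Finset.mem_sdiff, Finset.mem_insert]
      constructor
      · intro hj
        rintro (rfl | hjA)
        · exact lt_irrefl _ hj
        · exact absurd hj (not_lt.mpr (le_of_lt (hA _ hjA)))
      · intro hj
        push_neg at hj
        exact hA' j hj.2 hj.1
    rw [hset]
    rw [Finset.card_sdiff_of_subset (Finset.subset_univ _)]
    rw [Finset.card_insert_of_notMem hiA]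
    simp [hk]
  have hcount_gt : l.countP (fun x => decide (X i < x)) = k := by
    have e1 : (l.countP fun x => decide (X i < x)) = Multiset.countP (fun x => X i < x) M := by
      conv_rhs => rw [← Multiset.sort_eq M (fun x1 x2 : ℝ => x1 ≤ x2), Multiset.coe_countP]
    rw [e1, hM, Multiset.countP_map]
    rw [show (Multiset.filter (fun j => X i < X j) Finset.univ.val)
        = (Finset.univ.filter fun j => X i < X j).val from (Finset.filter_val _ _).symm]
    rw [show Multiset.card (Finset.univ.filter fun j => X i < X j).val
        = (Finset.univ.filter fun j => X i < X j).card from rfl]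
    have hset : (Finset.univ.filter fun j => X i < X j) = A := by
      ext j
      simp only [Finset.mem_filter, Finset.mem_univ, true_and]
      constructor
      · intro hj
        by_contra hjA
        rcases eq_or_ne j i with rfl | hji
        · exact lt_irrefl _ hj
        · exact absurd hj (not_lt.mpr (le_of_lt (hA' j hjA hji)))
      · exact hA j
    rw [hset]
  have hmain : l.get ⟨n - (k+1), hm⟩ = X i := by
    set m := n - (k+1) with hmm
    by_contra hne
    rcases lt_or_gt_of_ne hne with hlt | hgt
    · have := countP_sorted_ge hsorted hm (fun x => decide (x < X i))
        (fun x y hxy hy => by simp at hy ⊢; exact lt_of_le_of_lt hxy hy) (by simpa using hlt)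
      omega
    · have h1 : l.countP (fun x => decide (X i < x)) =
          (l.take m).countP (fun x => decide (X i < x)) +
          (l.drop m).countP (fun x => decide (X i < x)) := by
        rw [← List.countP_append, List.take_append_drop]
      have h2 : (l.drop m).countP (fun x => decide (X i < x)) = (l.drop m).length := by
        rw [List.countP_eq_length]
        intro x hx
        rw [List.mem_drop_iff_getElem] at hx
        obtain ⟨j, hj, rfl⟩ := hx
        simp only [decide_eq_true_eq]
        calc X i < l.get ⟨m, hm⟩ := hgt
        _ ≤ l[m + j] := hsorted.rel_get_of_le (a := ⟨m, hm⟩) (b := ⟨m + j, by omega⟩)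
            (Fin.mk_le_mk.mpr (Nat.le_add_right m j))
      rw [h2, List.length_drop] at h1
      omega
  rw [kthLargest, hcard, ← hldef]
  rw [List.getD_eq_getElem _ _ (by omega)]
  exact hmain

lemma exists_rank {n : ℕ} (X : Fin n → ℝ) (hX : ∀ a b : Fin n, a ≠ b → X a ≠ X b)
    {k : ℕ} (hk : k < n) :
    ∃ i, (Finset.univ.filter fun j => X i < X j).card = k := by
  classical
  have hlt : ∀ i : Fin n, (Finset.univ.filter fun j => X i < X j).card < n := by
    intro i
    have hsub : (Finset.univ.filter fun j => X i < X j) ⊆ Finset.univ.erase i := by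
      intro j hj
      simp only [Finset.mem_filter] at hj
      exact Finset.mem_erase.mpr ⟨fun h => absurd (h ▸ hj.2) (lt_irrefl _), Finset.mem_univ _⟩
    have := Finset.card_le_card hsub
    rw [Finset.card_erase_of_mem (Finset.mem_univ i), Finset.card_univ, Fintype.card_fin] at this
    have := i.pos
    omega
  set F : Fin n → Fin n := fun i => ⟨(Finset.univ.filter fun j => X i < X j).card, hlt i⟩ with hF
  have hmono : ∀ a b : Fin n, X a < X b → (F b : ℕ) < (F a : ℕ) := by
    intro a b hab
    have hsub : insert b (Finset.univ.filter fun j => X b < X j) ⊆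
        (Finset.univ.filter fun j => X a < X j) := by
      intro j hj
      rcases Finset.mem_insert.mp hj with rfl | hj
      · exact Finset.mem_filter.mpr ⟨Finset.mem_univ _, hab⟩
      · exact Finset.mem_filter.mpr ⟨Finset.mem_univ _,
          lt_trans hab (Finset.mem_filter.mp hj).2⟩
    have hb : b ∉ (Finset.univ.filter fun j => X b < X j) := by
      simp
    have := Finset.card_le_card hsub
    rw [Finset.card_insert_of_notMem hb] at this
    simpa [hF] using this
  have hinj : Function.Injective F := by
    intro a b hab
    by_contra hne
    rcases lt_or_gt_of_ne (hX a b hne) with h | h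
    · exact absurd (congrArg Fin.val hab) (by have := hmono a b h; omega)
    · exact absurd (congrArg Fin.val hab) (by have := hmono b a h; omega)
  have hsurj : Function.Surjective F := Finite.surjective_of_injective hinj
  obtain ⟨i, hi⟩ := hsurj ⟨k, hk⟩
  exact ⟨i, congrArg Fin.val hi⟩

/-! ### Measure machinery -/

noncomputable def nu : Measure ℝ := volume.restrict (Set.Icc (0:ℝ) 1)

instance : IsProbabilityMeasure nu := by
  constructor
  rw [nu, Measure.restrict_apply_univ, Real.volume_Icc]
  norm_num

noncomputable def itv : Fin 5 → ℝ → Set ℝ :=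
  ![fun t => Ioi t, fun t => Iio t, fun t => Iic t, fun t => {t}, fun _ => univ]

lemma nu_singleton (t : ℝ) : nu {t} = 0 :=
  le_antisymm (le_trans (Measure.restrict_le_self _) (by simp)) (zero_le)

lemma measurable_nu_itv (k : Fin 5) : Measurable fun t => nu (itv k t) := by
  fin_cases k
  · show Measurable fun t => nu (Ioi t)
    exact Antitone.measurable fun a b hab => measure_mono (Ioi_subset_Ioi hab)
  · show Measurable fun t => nu (Iio t)
    exact Monotone.measurable fun a b hab => measure_mono (Iio_subset_Iio hab)
  · show Measurable fun t => nu (Iic t)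
    exact Monotone.measurable fun a b hab => measure_mono (Iic_subset_Iic.mpr hab)
  · show Measurable fun t => nu {t}
    have : (fun t : ℝ => nu {t}) = fun _ => 0 := funext nu_singleton
    rw [this]; exact measurable_const
  · show Measurable fun _ : ℝ => nu univ
    exact measurable_const

lemma nu_Ioi {t : ℝ} (h1 : 0 ≤ t) (h2 : t ≤ 1) : nu (Set.Ioi t) = ENNReal.ofReal (1 - t) := by
  rw [nu, Measure.restrict_apply measurableSet_Ioi,
    show Set.Ioi t ∩ Set.Icc 0 1 = Set.Ioc t 1 from by
      ext x; simp only [mem_inter_iff, mem_Ioi, mem_Icc, mem_Ioc]; constructor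
      · rintro ⟨h, _, h'⟩; exact ⟨h, h'⟩
      · rintro ⟨h, h'⟩; exact ⟨h, le_trans h1 h.le, h'⟩,
    Real.volume_Ioc]

lemma nu_Iio {t : ℝ} (h1 : 0 ≤ t) (h2 : t ≤ 1) : nu (Set.Iio t) = ENNReal.ofReal t := by
  rw [nu, Measure.restrict_apply measurableSet_Iio,
    show Set.Iio t ∩ Set.Icc 0 1 = Set.Ico 0 t from by
      ext x; simp only [mem_inter_iff, mem_Iio, mem_Icc, mem_Ico]; constructor
      · rintro ⟨h, h', _⟩; exact ⟨h', h⟩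
      · rintro ⟨h, h'⟩; exact ⟨h', h, le_trans h'.le h2⟩,
    Real.volume_Ico, sub_zero]

lemma nu_Iic {t : ℝ} (h1 : 0 ≤ t) (h2 : t ≤ 1) : nu (Set.Iic t) = ENNReal.ofReal t := by
  rw [nu, Measure.restrict_apply measurableSet_Iic,
    show Set.Iic t ∩ Set.Icc 0 1 = Set.Icc 0 t from by
      ext x; simp only [mem_inter_iff, mem_Iic, mem_Icc]; constructor
      · rintro ⟨h, h', _⟩; exact ⟨h', h⟩
      · rintro ⟨h, h'⟩; exact ⟨h', h, le_trans h' h2⟩,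
    Real.volume_Icc, sub_zero]

lemma measurableSet_itv_cond {α : Type*} [MeasurableSpace α] (k : Fin 5)
    {f g : α → ℝ} (hf : Measurable f) (hg : Measurable g) :
    MeasurableSet {x | f x ∈ itv k (g x)} := by
  fin_cases k <;> simp only [itv, Matrix.cons_val_zero, Matrix.cons_val_one, Matrix.head_cons,
    mem_Ioi, mem_Iio, mem_Iic, mem_singleton_iff, mem_univ, setOf_true]
  · exact measurableSet_lt hg hf
  · exact measurableSet_lt hf hg
  · exact measurableSet_le hf hg
  · exact measurableSet_eq_fun hf hg
  · exact MeasurableSet.univ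

theorem key {ι : Type*} [Fintype ι] [DecidableEq ι] (c : ι) (K : ι → Fin 5) :
    Measure.pi (fun _ : ι => nu) {ω : ι → ℝ | ∀ j, j ≠ c → ω j ∈ itv (K j) (ω c)} =
      ∫⁻ t, ∏ j ∈ Finset.univ.erase c, nu (itv (K j) t) ∂nu := by
  classical
  set e := MeasurableEquiv.piEquivPiSubtypeProd (fun _ : ι => ℝ) (· = c) with he
  have h := measurePreserving_piEquivPiSubtypeProd (fun _ : ι => nu) (· = c)
  set S2 : Set ((∀ _ : {x : ι // x = c}, ℝ) × (∀ _ : {x : ι // ¬x = c}, ℝ)) :=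
    {p | ∀ j : {x : ι // ¬x = c}, p.2 j ∈ itv (K j.1) (p.1 ⟨c, rfl⟩)} with hS2def
  have hS2 : MeasurableSet S2 := by
    rw [hS2def]
    rw [show {p : (∀ _ : {x : ι // x = c}, ℝ) × (∀ _ : {x : ι // ¬x = c}, ℝ) |
        ∀ j : {x : ι // ¬x = c}, p.2 j ∈ itv (K j.1) (p.1 ⟨c, rfl⟩)} =
        ⋂ j : {x : ι // ¬x = c}, {p : (∀ _ : {x : ι // x = c}, ℝ) × (∀ _ : {x : ι // ¬x = c}, ℝ) |
          p.2 j ∈ itv (K j.1) (p.1 ⟨c, rfl⟩)} from by ext p; simp]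
    exact MeasurableSet.iInter fun j => measurableSet_itv_cond (K j.1)
      ((measurable_pi_apply j).comp measurable_snd)
      ((measurable_pi_apply (⟨c, rfl⟩ : {x : ι // x = c})).comp
        (measurable_fst : Measurable fun p :
          (∀ _ : {x : ι // x = c}, ℝ) × (∀ _ : {x : ι // ¬x = c}, ℝ) => p.1))
  have hpre : {ω : ι → ℝ | ∀ j, j ≠ c → ω j ∈ itv (K j) (ω c)} = e ⁻¹' S2 := by
    ext ω
    simp only [mem_setOf_eq, mem_preimage, he, MeasurableEquiv.piEquivPiSubtypeProd,
      MeasurableEquiv.coe_mk, Equiv.piEquivPiSubtypeProd, Equiv.coe_fn_mk, hS2def]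
    constructor
    · intro hω j; exact hω j.1 j.2
    · intro hω j hj; exact hω ⟨j, hj⟩
  rw [hpre, h.measure_preimage hS2.nullMeasurableSet]
  rw [Measure.prod_apply hS2]
  have hinner : ∀ f : (∀ _ : {x : ι // x = c}, ℝ),
      (Measure.pi fun _ : {x : ι // ¬x = c} => nu) (Prod.mk f ⁻¹' S2) =
      ∏ j : {x : ι // ¬x = c}, nu (itv (K j.1) (f ⟨c, rfl⟩)) := by
    intro f
    rw [show Prod.mk f ⁻¹' S2 = Set.pi univ (fun j : {x : ι // ¬x = c} => itv (K j.1) (f ⟨c, rfl⟩))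
      from by ext ρ; simp [hS2def, Set.mem_pi]]
    exact Measure.pi_pi _ _
  simp_rw [hinner]
  have hgm : Measurable (fun t => ∏ j : {x : ι // ¬x = c}, nu (itv (K j.1) t)) :=
    Finset.measurable_prod _ fun j _ => measurable_nu_itv (K j.1)
  have step1 : (∫⁻ x : (∀ _ : {x : ι // x = c}, ℝ),
      ∏ j : {x : ι // ¬x = c}, nu (itv (K j.1) (x ⟨c, rfl⟩))
      ∂(Measure.pi fun _ : {x : ι // x = c} => nu)) =
      ∫⁻ t, ∏ j : {x : ι // ¬x = c}, nu (itv (K j.1) t) ∂nu :=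
    (measurePreserving_piUnique (fun _ : {x : ι // x = c} => nu)).lintegral_comp hgm
  have hinst : (Subtype.fintype fun x : ι => x = c) = Fintype.subtypeEq c :=
    Subsingleton.elim _ _
  rw [hinst]
  refine step1.trans ?_
  congr 1
  funext t
  exact (Finset.prod_subtype (Finset.univ.erase c) (fun x => by simp)
    fun x => nu (itv (K x) t)).symm

section main

variable {N C : ℕ}

def Kf (i : Fin N) (A : Finset (Fin N)) (s : Finset (Fin C)) : Fin N ⊕ Fin C → Fin 5 :=
  Sum.elim (fun j => if j = i then (4 : Fin 5) else if j ∈ A then 0 else 1)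
    (fun j => if j ∈ s then (0 : Fin 5) else 2)

def Eset (i : Fin N) (A : Finset (Fin N)) (s : Finset (Fin C)) : Set (Fin N ⊕ Fin C → ℝ) :=
  {ω | ∀ j, j ≠ Sum.inl i → ω j ∈ itv (Kf i A s j) (ω (Sum.inl i))}

lemma measurableSet_Eset (i : Fin N) (A : Finset (Fin N)) (s : Finset (Fin C)) :
    MeasurableSet (Eset i A s) := by
  rw [show Eset i A s = ⋂ j, ⋂ (_ : j ≠ Sum.inl i),
      {ω : Fin N ⊕ Fin C → ℝ | ω j ∈ itv (Kf i A s j) (ω (Sum.inl i))} from by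
    ext ω; simp [Eset]]
  exact MeasurableSet.iInter fun j => MeasurableSet.iInter fun _ =>
    measurableSet_itv_cond _ (measurable_pi_apply j) (measurable_pi_apply (Sum.inl i))

lemma measure_Eset (i : Fin N) (A : Finset (Fin N)) (hiA : i ∉ A) (s : Finset (Fin C)) :
    Measure.pi (fun _ : Fin N ⊕ Fin C => nu) (Eset i A s) =
      ENNReal.ofReal (∫ t in (0:ℝ)..1,
        t ^ (N - 1 - A.card + (C - s.card)) * (1 - t) ^ (A.card + s.card)) := by
  classical
  rw [Eset, key (Sum.inl i) (Kf i A s)]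
  set a := A.card + s.card with ha
  set b := N - 1 - A.card + (C - s.card) with hb
  have hprod : ∀ t ∈ Icc (0:ℝ) 1,
      (∏ j ∈ Finset.univ.erase (Sum.inl i), nu (itv (Kf i A s j) t)) =
        ENNReal.ofReal (t ^ b * (1 - t) ^ a) := by
    intro t ht
    have h01 : nu (itv (Kf i A s (Sum.inl i)) t) = 1 := by
      simp only [Kf, Sum.elim_inl, if_pos rfl]
      show nu univ = 1
      exact measure_univ
    have h1 : (∏ j ∈ Finset.univ.erase (Sum.inl i), nu (itv (Kf i A s j) t)) =
        ∏ j : Fin N ⊕ Fin C, nu (itv (Kf i A s j) t) := by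
      rw [← Finset.mul_prod_erase Finset.univ _ (Finset.mem_univ (Sum.inl i)), h01, one_mul]
    rw [h1, Fintype.prod_sum_type]
    have hN : (∏ j : Fin N, nu (itv (Kf i A s (Sum.inl j)) t)) =
        ENNReal.ofReal (1 - t) ^ A.card * ENNReal.ofReal t ^ (N - 1 - A.card) := by
      rw [← Finset.mul_prod_erase Finset.univ _ (Finset.mem_univ i), h01, one_mul]
      have hcong : ∀ j ∈ Finset.univ.erase i, nu (itv (Kf i A s (Sum.inl j)) t) =
          if j ∈ A then ENNReal.ofReal (1 - t) else ENNReal.ofReal t := by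
        intro j hj
        have hj' := (Finset.mem_erase.mp hj).1
        by_cases hA : j ∈ A
        · rw [if_pos hA]
          simp only [Kf, Sum.elim_inl, if_neg hj', if_pos hA]
          exact nu_Ioi ht.1 ht.2
        · rw [if_neg hA]
          simp only [Kf, Sum.elim_inl, if_neg hj', if_neg hA]
          exact nu_Iio ht.1 ht.2
      rw [Finset.prod_congr rfl hcong, Finset.prod_ite, Finset.prod_const, Finset.prod_const]
      have hfe : (Finset.univ.erase i).filter (fun j => j ∈ A) = A := by
        ext j
        simp only [Finset.mem_filter, Finset.mem_erase, Finset.mem_univ, and_true, true_and]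
        exact ⟨fun h => h.2, fun h => ⟨fun he => hiA (he ▸ h), h⟩⟩
      have hcards := Finset.card_filter_add_card_filter_not
        (s := Finset.univ.erase i) (p := fun j => j ∈ A)
      rw [hfe] at hcards ⊢
      have hce : (Finset.univ.erase i).card = N - 1 := by
        rw [Finset.card_erase_of_mem (Finset.mem_univ i), Finset.card_univ, Fintype.card_fin]
      rw [hce] at hcards
      congr 2
      omega
    have hCC : (∏ j : Fin C, nu (itv (Kf i A s (Sum.inr j)) t)) =
        ENNReal.ofReal (1 - t) ^ s.card * ENNReal.ofReal t ^ (C - s.card) := by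
      have hcong : ∀ j ∈ (Finset.univ : Finset (Fin C)), nu (itv (Kf i A s (Sum.inr j)) t) =
          if j ∈ s then ENNReal.ofReal (1 - t) else ENNReal.ofReal t := by
        intro j _
        by_cases hs : j ∈ s
        · rw [if_pos hs]
          simp only [Kf, Sum.elim_inr, if_pos hs]
          exact nu_Ioi ht.1 ht.2
        · rw [if_neg hs]
          simp only [Kf, Sum.elim_inr, if_neg hs]
          exact nu_Iic ht.1 ht.2
      rw [Finset.prod_congr rfl hcong, Finset.prod_ite, Finset.prod_const, Finset.prod_const]
      have hfe : Finset.univ.filter (fun j => j ∈ s) = s := by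
        ext j; simp
      have hcards := Finset.card_filter_add_card_filter_not
        (s := (Finset.univ : Finset (Fin C))) (p := fun j => j ∈ s)
      rw [hfe] at hcards ⊢
      rw [Finset.card_univ, Fintype.card_fin] at hcards
      congr 2
      omega
    rw [hN, hCC]
    rw [show ENNReal.ofReal (1 - t) ^ A.card * ENNReal.ofReal t ^ (N - 1 - A.card) *
        (ENNReal.ofReal (1 - t) ^ s.card * ENNReal.ofReal t ^ (C - s.card)) =
        ENNReal.ofReal t ^ b * ENNReal.ofReal (1 - t) ^ a from by
      rw [ha, hb, pow_add, pow_add]; ring]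
    rw [← ENNReal.ofReal_pow ht.1, ← ENNReal.ofReal_pow (by linarith [ht.2]),
      ← ENNReal.ofReal_mul (pow_nonneg ht.1 _)]
  have hrestrict : (∫⁻ t, (∏ j ∈ Finset.univ.erase (Sum.inl i), nu (itv (Kf i A s j) t)) ∂nu) =
      ∫⁻ t in Icc (0:ℝ) 1, ENNReal.ofReal (t ^ b * (1 - t) ^ a) ∂volume := by
    rw [nu]
    exact setLIntegral_congr_fun measurableSet_Icc hprod
  rw [hrestrict]
  have hcont : Continuous fun t : ℝ => t ^ b * (1 - t) ^ a := by continuity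
  have hint : IntegrableOn (fun t : ℝ => t ^ b * (1 - t) ^ a) (Icc 0 1) volume :=
    hcont.integrableOn_Icc
  rw [← MeasureTheory.ofReal_integral_eq_lintegral_ofReal hint
    ((ae_restrict_iff' measurableSet_Icc).mpr (ae_of_all _ fun t ht =>
      mul_nonneg (pow_nonneg ht.1 _) (pow_nonneg (by linarith [ht.2]) _)))]
  congr 1
  rw [MeasureTheory.integral_Icc_eq_integral_Ioc, ← intervalIntegral.integral_of_le zero_le_one]

lemma null_tie {ι : Type*} [Fintype ι] [DecidableEq ι] {c c' : ι} (h : c' ≠ c) :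
    Measure.pi (fun _ : ι => nu) {ω : ι → ℝ | ω c' = ω c} = 0 := by
  classical
  set K : ι → Fin 5 := fun j => if j = c' then 3 else 4 with hK
  have hset : {ω : ι → ℝ | ω c' = ω c} = {ω : ι → ℝ | ∀ j, j ≠ c → ω j ∈ itv (K j) (ω c)} := by
    ext ω
    simp only [mem_setOf_eq]
    constructor
    · intro hω j hj
      by_cases hj' : j = c'
      · subst hj'
        simp only [hK, if_pos rfl]
        show ω j ∈ {ω c}
        exact hω
      · simp only [hK, if_neg hj']
        show ω j ∈ univ
        trivial
    · intro hω
      have := hω c' h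
      simp only [hK, if_pos rfl] at this; exact this
  rw [hset, key c K]
  have : ∀ t : ℝ, (∏ j ∈ Finset.univ.erase c, nu (itv (K j) t)) = 0 := by
    intro t
    apply Finset.prod_eq_zero (Finset.mem_erase.mpr ⟨h, Finset.mem_univ c'⟩)
    simp only [hK, if_pos rfl]
    exact nu_singleton t
  simp only [this, lintegral_zero]

lemma Eset_spec {i : Fin N} {A : Finset (Fin N)} {s : Finset (Fin C)} (hiA : i ∉ A)
    {ω : Fin N ⊕ Fin C → ℝ} (hω : ω ∈ Eset i A s) :
    (kthLargest (Multiset.map (fun j : Fin N => ω (Sum.inl j)) Finset.univ.val) (A.card + 1)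
      = ω (Sum.inl i)) ∧
    (Finset.univ.filter fun j : Fin C =>
      kthLargest (Multiset.map (fun j : Fin N => ω (Sum.inl j)) Finset.univ.val) (A.card + 1)
        < ω (Sum.inr j)) = s := by
  set X : Fin N → ℝ := fun j => ω (Sum.inl j) with hX
  have hA : ∀ j ∈ A, X i < X j := by
    intro j hj
    have hji : j ≠ i := fun h => hiA (h ▸ hj)
    have := hω (Sum.inl j) (by simp [hji])
    simp only [Kf, Sum.elim_inl, if_neg hji, if_pos hj] at this; exact this
  have hA' : ∀ j, j ∉ A → j ≠ i → X j < X i := by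
    intro j hjA hji
    have := hω (Sum.inl j) (by simp [hji])
    simp only [Kf, Sum.elim_inl, if_neg hji, if_neg hjA] at this; exact this
  have hs : ∀ j ∈ s, X i < ω (Sum.inr j) := by
    intro j hj
    have := hω (Sum.inr j) (by simp)
    simp only [Kf, Sum.elim_inr, if_pos hj] at this; exact this
  have hs' : ∀ j, j ∉ s → ω (Sum.inr j) ≤ X i := by
    intro j hj
    have := hω (Sum.inr j) (by simp)
    simp only [Kf, Sum.elim_inr, if_neg hj] at this; exact this
  have hkth := kthLargest_eq X i A hiA hA hA'
  refine ⟨hkth, ?_⟩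
  ext j
  simp only [Finset.mem_filter, Finset.mem_univ, true_and, hkth]
  constructor
  · intro hj
    by_contra hjs
    exact absurd hj (not_lt.mpr (hs' j hjs))
  · exact hs j

end main

lemma Eset_cond {N C : ℕ} {i : Fin N} {A : Finset (Fin N)} {s : Finset (Fin C)} (hiA : i ∉ A)
    {ω : Fin N ⊕ Fin C → ℝ} (hω : ω ∈ Eset i A s) :
    (∀ j ∈ A, ω (Sum.inl i) < ω (Sum.inl j)) ∧
    (∀ j, j ∉ A → j ≠ i → ω (Sum.inl j) < ω (Sum.inl i)) ∧
    (∀ j ∈ s, ω (Sum.inl i) < ω (Sum.inr j)) ∧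
    (∀ j, j ∉ s → ω (Sum.inr j) ≤ ω (Sum.inl i)) := by
  refine ⟨fun j hj => ?_, fun j hjA hji => ?_, fun j hj => ?_, fun j hj => ?_⟩
  · have hji : j ≠ i := fun h => hiA (h ▸ hj)
    have := hω (Sum.inl j) (by simp [hji])
    simp only [Kf, Sum.elim_inl, if_neg hji, if_pos hj] at this; exact this
  · have := hω (Sum.inl j) (by simp [hji])
    simp only [Kf, Sum.elim_inl, if_neg hji, if_neg hjA] at this; exact this
  · have := hω (Sum.inr j) (by simp)
    simp only [Kf, Sum.elim_inr, if_pos hj] at this; exact this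
  · have := hω (Sum.inr j) (by simp)
    simp only [Kf, Sum.elim_inr, if_neg hj] at this; exact this

/-- With `N + C` i.i.d. Uniform[0,1] valuations (product over `Fin N ⊕ Fin C` of
Lebesgue measure restricted to `[0,1]`), writing `X = ω ∘ Sum.inl` for the
non-colluding and `Y = ω ∘ Sum.inr` for the colluding coordinates, the probability
that at least `r - k` colluding coordinates exceed the `(k+1)`-th largest
non-colluding coordinate equals
`∑_{q=r-k}^{C} (C choose q) B(C+N-k-q, q+k+1) / B(N-k, k+1)`:
the probability that all `r - k` items reserved for the colluders are sold in the
Hybrid-VCG mechanism. -/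
theorem stmt_13 (N C k r : ℕ) (hN : 1 ≤ N) (hC : 1 ≤ C) (hkN : k + 1 ≤ N)
    (hkr : k ≤ r)
    (μ : Measure ((Fin N ⊕ Fin C) → ℝ))
    (hμ : μ = Measure.pi fun _ => volume.restrict (Set.Icc (0 : ℝ) 1)) :
    μ {ω : (Fin N ⊕ Fin C) → ℝ |
        r - k ≤ (Finset.univ.filter fun j : Fin C =>
          kthLargest (Multiset.map (fun i : Fin N => ω (Sum.inl i)) Finset.univ.val)
              (k + 1) < ω (Sum.inr j)).card} =
      ENNReal.ofReal (∑ q ∈ Finset.Icc (r - k) C,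
        (C.choose q : ℝ) * betaFn (C + N - k - q) (q + k + 1) /
          betaFn (N - k) (k + 1)) := by
  classical
  have hnu : (volume.restrict (Set.Icc (0:ℝ) 1)) = nu := rfl
  rw [hμ]
  simp only [hnu]
  set π : Measure ((Fin N ⊕ Fin C) → ℝ) := Measure.pi fun _ => nu with hπ
  set Ev : Set ((Fin N ⊕ Fin C) → ℝ) := {ω : (Fin N ⊕ Fin C) → ℝ |
      r - k ≤ (Finset.univ.filter fun j : Fin C =>
        kthLargest (Multiset.map (fun i : Fin N => ω (Sum.inl i)) Finset.univ.val)
            (k + 1) < ω (Sum.inr j)).card} with hEv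
  set D1 : Finset (Finset (Fin C)) := Finset.univ.powerset.filter (fun s => r - k ≤ s.card)
    with hD1
  set D2 : Finset (Fin N × Finset (Fin N)) :=
    (Finset.univ ×ˢ Finset.univ.powersetCard k).filter (fun p => p.1 ∉ p.2) with hD2
  have hD2mem : ∀ p ∈ D2, p.1 ∉ p.2 ∧ p.2.card = k := by
    intro p hp
    rw [hD2, Finset.mem_filter, Finset.mem_product, Finset.mem_powersetCard] at hp
    exact ⟨hp.2, hp.1.2.2⟩
  -- each piece is contained in the event
  have hsub1 : ∀ p ∈ D1 ×ˢ D2, Eset p.2.1 p.2.2 p.1 ⊆ Ev := by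
    rintro ⟨s, i, A⟩ hp ω hω
    rw [Finset.mem_product] at hp
    obtain ⟨hiA, hAc⟩ := hD2mem _ hp.2
    have hs1 : r - k ≤ s.card := (Finset.mem_filter.mp hp.1).2
    obtain ⟨h1, h2⟩ := Eset_spec hiA hω
    rw [hAc] at h2
    rw [hEv, mem_setOf_eq, h2]
    exact hs1
  -- ties are null
  set T : Set ((Fin N ⊕ Fin C) → ℝ) :=
    ⋃ (a : Fin N) (b : Fin N) (_ : a ≠ b), {ω : (Fin N ⊕ Fin C) → ℝ |
      ω (Sum.inl a) = ω (Sum.inl b)} with hT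
  have hTnull : π T = 0 := by
    rw [hT]
    refine measure_iUnion_null fun a => measure_iUnion_null fun b => measure_iUnion_null fun hab =>
      null_tie ?_
    simp [hab]
  -- event is covered
  have hsub2 : Ev ⊆ (⋃ p ∈ D1 ×ˢ D2, Eset p.2.1 p.2.2 p.1) ∪ T := by
    intro ω hω
    by_cases hωT : ω ∈ T
    · exact Or.inr hωT
    left
    set X : Fin N → ℝ := fun j => ω (Sum.inl j) with hX
    have hdist : ∀ a b : Fin N, a ≠ b → X a ≠ X b := by
      intro a b hab heq
      exact hωT (by rw [hT]; exact mem_iUnion.mpr ⟨a, mem_iUnion.mpr ⟨b,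
        mem_iUnion.mpr ⟨hab, heq⟩⟩⟩)
    obtain ⟨i, hi⟩ := exists_rank X hdist (hkN : k < N)
    set A : Finset (Fin N) := Finset.univ.filter fun j => X i < X j with hA
    have hiA : i ∉ A := by simp [hA]
    have hAc : A.card = k := hi
    have hAmem : ∀ j ∈ A, X i < X j := fun j hj => (Finset.mem_filter.mp hj).2
    have hA' : ∀ j, j ∉ A → j ≠ i → X j < X i := by
      intro j hjA hji
      refine lt_of_le_of_ne (not_lt.mp ?_) (hdist j i hji)
      intro hlt
      exact hjA (Finset.mem_filter.mpr ⟨Finset.mem_univ _, hlt⟩)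
    have hkth := kthLargest_eq X i A hiA hAmem hA'
    rw [hAc] at hkth
    set s : Finset (Fin C) := Finset.univ.filter fun j => X i < ω (Sum.inr j) with hs
    have hfs : (Finset.univ.filter fun j : Fin C =>
        kthLargest (Multiset.map (fun i : Fin N => ω (Sum.inl i)) Finset.univ.val)
            (k + 1) < ω (Sum.inr j)) = s := by
      ext j
      simp only [hs, Finset.mem_filter, Finset.mem_univ, true_and]
      rw [hkth]
    have hscard : r - k ≤ s.card := by
      have := hω
      rw [hEv, mem_setOf_eq, hfs] at this
      exact this
    have hpD : (⟨s, i, A⟩ : Finset (Fin C) × Fin N × Finset (Fin N)) ∈ D1 ×ˢ D2 := by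
      rw [Finset.mem_product]
      constructor
      · rw [hD1, Finset.mem_filter, Finset.mem_powerset]
        exact ⟨Finset.subset_univ _, hscard⟩
      · rw [hD2, Finset.mem_filter, Finset.mem_product, Finset.mem_powersetCard]
        exact ⟨⟨Finset.mem_univ _, Finset.subset_univ _, hAc⟩, hiA⟩
    refine Set.mem_biUnion hpD ?_
    intro j hj
    match j with
    | Sum.inl j =>
      have hji : j ≠ i := fun h => hj (by rw [h])
      by_cases hjA : j ∈ A
      · simp only [Kf, Sum.elim_inl, if_neg hji, if_pos hjA]
        exact hAmem j hjA
      · simp only [Kf, Sum.elim_inl, if_neg hji, if_neg hjA]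
        exact hA' j hjA hji
    | Sum.inr j =>
      by_cases hjs : j ∈ s
      · simp only [Kf, Sum.elim_inr, if_pos hjs]
        exact (Finset.mem_filter.mp hjs).2
      · simp only [Kf, Sum.elim_inr, if_neg hjs]
        show ω (Sum.inr j) ≤ ω (Sum.inl i)
        by_contra hlt
        exact hjs (Finset.mem_filter.mpr ⟨Finset.mem_univ _, not_le.mp hlt⟩)
  -- disjointness
  have hdisj : (↑(D1 ×ˢ D2) : Set (Finset (Fin C) × Fin N × Finset (Fin N))).PairwiseDisjoint
      (fun p => Eset p.2.1 p.2.2 p.1) := by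
    rintro ⟨s, i, A⟩ hp ⟨s', i', A'⟩ hp' hne
    rw [Finset.mem_coe, Finset.mem_product] at hp hp'
    obtain ⟨hiA, hAc⟩ := hD2mem _ hp.2
    obtain ⟨hiA', hAc'⟩ := hD2mem _ hp'.2
    rw [Function.onFun, Set.disjoint_left]
    intro ω hω hω'
    obtain ⟨c1, c2, c3, c4⟩ := Eset_cond hiA hω
    obtain ⟨d1, d2, d3, d4⟩ := Eset_cond hiA' hω'
    have h1 := Eset_spec hiA hω
    have h1' := Eset_spec hiA' hω'
    have hXX : ω (Sum.inl i) = ω (Sum.inl i') := by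
      rw [← h1.1, ← h1'.1, hAc, hAc']
    have hii : i = i' := by
      by_contra hne2
      by_cases hmem : i' ∈ A
      · exact absurd hXX (ne_of_lt (c1 i' hmem))
      · exact absurd hXX.symm (ne_of_lt (c2 i' hmem (Ne.symm hne2)))
    subst hii
    have hAA : A = A' := by
      ext j
      constructor
      · intro hj
        by_contra hj'
        have hji : j ≠ i := fun h => hiA (h ▸ hj)
        have := d2 j hj' hji
        rw [hXX] at this
        exact absurd (c1 j hj) (not_lt.mpr this.le)
      · intro hj
        by_contra hj'
        have hji : j ≠ i := fun h => hiA' (h ▸ hj)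
        have := c2 j hj' hji
        have h2 := d1 j hj
        rw [← hXX] at h2
        exact absurd h2 (not_lt.mpr this.le)
    have hss : s = s' := by
      ext j
      constructor
      · intro hj
        by_contra hj'
        have := d4 j hj'
        rw [← hXX] at this
        exact absurd (c3 j hj) (not_lt.mpr this)
      · intro hj
        by_contra hj'
        have := c4 j hj'
        rw [hXX] at this
        exact absurd (d3 j hj) (not_lt.mpr this)
    exact hne (by rw [hAA, hss])
  -- measure of the event as a sum
  have hmeasEq : π Ev = ∑ p ∈ D1 ×ˢ D2, π (Eset p.2.1 p.2.2 p.1) := by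
    have hum : π Ev = π (⋃ p ∈ D1 ×ˢ D2, Eset p.2.1 p.2.2 p.1) := by
      refine le_antisymm ?_ (measure_mono (iUnion₂_subset hsub1))
      calc π Ev ≤ π ((⋃ p ∈ D1 ×ˢ D2, Eset p.2.1 p.2.2 p.1) ∪ T) := measure_mono hsub2
        _ ≤ π (⋃ p ∈ D1 ×ˢ D2, Eset p.2.1 p.2.2 p.1) + π T := measure_union_le _ _
        _ = π (⋃ p ∈ D1 ×ˢ D2, Eset p.2.1 p.2.2 p.1) := by rw [hTnull, add_zero]
    rw [hum]
    exact measure_biUnion_finset hdisj fun p _ => measurableSet_Eset p.2.1 p.2.2 p.1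
  rw [hmeasEq]
  -- evaluate each measure
  have hval : ∀ p ∈ D1 ×ˢ D2, π (Eset p.2.1 p.2.2 p.1) =
      ENNReal.ofReal (betaFn (C + N - k - p.1.card) (p.1.card + k + 1)) := by
    rintro ⟨s, i, A⟩ hp
    rw [Finset.mem_product] at hp
    obtain ⟨hiA, hAc⟩ := hD2mem _ hp.2
    have hsC : s.card ≤ C := le_trans (Finset.card_le_univ s) (by simp)
    rw [hπ, measure_Eset i A hiA s]
    congr 1
    rw [betaFn, hAc]
    rw [show N - 1 - k + (C - s.card) = C + N - k - s.card - 1 from by omega,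
      show k + s.card = s.card + k + 1 - 1 from by omega]
  rw [Finset.sum_congr rfl hval]
  rw [Finset.sum_product]
  -- inner sum is constant
  have hD2card : D2.card = N * (N-1).choose k := by
    rw [hD2]
    rw [Finset.card_filter]
    rw [Finset.sum_product]
    have hinner : ∀ i : Fin N, (∑ A ∈ Finset.univ.powersetCard k, if i ∉ A then 1 else 0) =
        (N-1).choose k := by
      intro i
      rw [← Finset.card_filter]
      have : (Finset.univ.powersetCard k).filter (fun A => i ∉ A) =
          (Finset.univ.erase i).powersetCard k := by
        ext A
        rw [Finset.mem_filter, Finset.mem_powersetCard, Finset.mem_powersetCard,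
          Finset.subset_erase]
        tauto
      rw [this, Finset.card_powersetCard, Finset.card_erase_of_mem (Finset.mem_univ i),
        Finset.card_univ, Fintype.card_fin]
    rw [Finset.sum_congr rfl fun i _ => hinner i, Finset.sum_const, Finset.card_univ,
      Fintype.card_fin, smul_eq_mul]
  have hconst : ∀ s ∈ D1, (∑ _pa ∈ D2,
      ENNReal.ofReal (betaFn (C + N - k - s.card) (s.card + k + 1))) =
      (N * (N-1).choose k) • ENNReal.ofReal (betaFn (C + N - k - s.card) (s.card + k + 1)) := by
    intro s _
    rw [Finset.sum_const, hD2card]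
  rw [Finset.sum_congr rfl hconst]
  -- group by cardinality
  have hD1split : D1 = (Finset.Icc (r-k) C).biUnion (fun q => Finset.univ.powersetCard q) := by
    ext s
    rw [hD1, Finset.mem_filter, Finset.mem_powerset, Finset.mem_biUnion]
    constructor
    · intro ⟨h1, h2⟩
      exact ⟨s.card, Finset.mem_Icc.mpr ⟨h2, le_trans (Finset.card_le_univ s) (by simp)⟩,
        Finset.mem_powersetCard.mpr ⟨h1, rfl⟩⟩
    · rintro ⟨q, hq, hs⟩
      rw [Finset.mem_powersetCard] at hs
      exact ⟨hs.1, hs.2 ▸ (Finset.mem_Icc.mp hq).1⟩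
  have hpd : Set.PairwiseDisjoint (↑(Finset.Icc (r-k) C) : Set ℕ)
      (fun q => Finset.powersetCard q (Finset.univ : Finset (Fin C))) := by
    intro q _ q' _ hne
    exact Finset.disjoint_left.mpr fun s hs hs' => hne (by
      rw [Finset.mem_powersetCard] at hs hs'
      rw [← hs.2, ← hs'.2])
  rw [hD1split, Finset.sum_biUnion hpd]
  have hgroup : ∀ q ∈ Finset.Icc (r-k) C,
      (∑ s ∈ Finset.powersetCard q (Finset.univ : Finset (Fin C)),
      (N * (N-1).choose k) • ENNReal.ofReal (betaFn (C + N - k - s.card) (s.card + k + 1))) =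
      (C.choose q) • ((N * (N-1).choose k) •
        ENNReal.ofReal (betaFn (C + N - k - q) (q + k + 1))) := by
    intro q _
    rw [Finset.sum_congr rfl (fun s hs => by
      rw [(Finset.mem_powersetCard.mp hs).2]), Finset.sum_const, Finset.card_powersetCard,
      Finset.card_univ, Fintype.card_fin]
  rw [Finset.sum_congr rfl hgroup]
  -- convert to ofReal of the real sum
  have hBne : betaFn (N-k) (k+1) ≠ 0 := by
    intro h0
    have := key_id hkN
    rw [h0, mul_zero] at this
    exact one_ne_zero this.symm
  have hBnonneg : ∀ q, 0 ≤ (C.choose q : ℝ) * betaFn (C + N - k - q) (q + k + 1) /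
      betaFn (N - k) (k + 1) := by
    intro q
    apply div_nonneg (mul_nonneg (Nat.cast_nonneg _) (betaFn_nonneg _ _)) (betaFn_nonneg _ _)
  rw [ENNReal.ofReal_sum_of_nonneg (fun q _ => hBnonneg q)]
  refine Finset.sum_congr rfl fun q hq => ?_
  rw [nsmul_eq_mul, nsmul_eq_mul]
  rw [← ENNReal.ofReal_natCast (N * (N-1).choose k), ← ENNReal.ofReal_natCast (C.choose q),
    ← ENNReal.ofReal_mul (Nat.cast_nonneg _), ← ENNReal.ofReal_mul (Nat.cast_nonneg _)]
  congr 1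
  rw [eq_div_iff hBne]
  have hid := key_id hkN
  push_cast
  linear_combination ((C.choose q : ℝ) * betaFn (C + N - k - q) (q + k + 1)) * hid
end

section
/- Let 0 < L ≤ U be reals, and let Q : ℝ → ℝ be monotone (nondecreasing) with L·x ≤ Q(x) ≤ U·x for all x ∈ [0,1]. Let k, r, C be naturals with k ≤ r, set m = r − k, and let w ∈ [0,1). Define θ = max 0 (1 − U·w/L) and, for θ' ∈ [0,1], E(θ') = ∑_{j=0}^{C} min(j, m) · (C choose j) · θ'^j · (1 − θ')^{C − j}. Then ((∫_w^1 Q(t) dt) / (1 − w)) · (k + E(1 − w)) ≥ (L · (1 + L·w/U) / 2) · (k + E(θ)). (This is the conditional form, given that the (k+1)-th largest non-colluding uniform order statistic equals w, of the minorant of the expected Hybrid-VCG welfare in Lemma 4.6.) -/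
/-!
The inequality splits into two factor-wise bounds between nonnegative quantities. For the
price factor, `Q t ≥ L t` on `[w, 1]` makes the average of `Q` over `[w, 1]` at least
`L (1 + w) / 2`, and `L w / U ≤ w`. For the quantity factor, `θ ≤ 1 - w` because `L ≤ U`, and
`E` is nondecreasing on `[0, 1]`: the expectation of a nondecreasing function of a
`Binomial(C, p)` variable increases with `p`, which follows by induction on `C` from the
first-trial decomposition `binomExpect_succ`.
-/

/-- `E[min(Binomial(C, θ'), m)] = ∑_{j=0}^{C} min(j, m) (C choose j) θ'^j (1-θ')^(C-j)`,
the expected number of items sold to colluders at a posted price with qualification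
probability `θ'` and capacity `m`. -/
noncomputable def binExp (C m : ℕ) (θ' : ℝ) : ℝ :=
  ∑ j ∈ Finset.range (C + 1),
    ((min j m : ℕ) : ℝ) * (C.choose j : ℝ) * θ' ^ j * (1 - θ') ^ (C - j)

open Finset

noncomputable def binomExpect (C : ℕ) (f : ℕ → ℝ) (p : ℝ) : ℝ :=
  ∑ j ∈ range (C + 1), f j * (C.choose j : ℝ) * p ^ j * (1 - p) ^ (C - j)

lemma mul_choose_succ_mul_pow_mul_pow (a : ℝ) (C j : ℕ) (p : ℝ) :
    a * ((C + 1).choose (j + 1) : ℝ) * p ^ (j + 1) * (1 - p) ^ (C + 1 - (j + 1)) =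
      p * (a * (C.choose j : ℝ) * p ^ j * (1 - p) ^ (C - j)) +
        (1 - p) * (a * (C.choose (j + 1) : ℝ) * p ^ (j + 1) * (1 - p) ^ (C - (j + 1))) := by
  rw [Nat.add_sub_add_right, Nat.choose_succ_succ]
  rcases lt_or_ge j C with hj | hj
  · obtain ⟨d, rfl⟩ := Nat.exists_eq_add_of_lt hj
    rw [show j + d + 1 - j = d + 1 by omega, show j + d + 1 - (j + 1) = d by omega]
    push_cast
    ring
  · rw [Nat.choose_eq_zero_of_lt (by omega : C < j + 1)]
    push_cast
    ring

lemma binomExpect_succ (C : ℕ) (f : ℕ → ℝ) (p : ℝ) :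
    binomExpect (C + 1) f p =
      p * binomExpect C (fun j => f (j + 1)) p + (1 - p) * binomExpect C f p := by
  have hshift : binomExpect C f p = ∑ j ∈ range (C + 1),
      f (j + 1) * (C.choose (j + 1) : ℝ) * p ^ (j + 1) * (1 - p) ^ (C - (j + 1)) +
        f 0 * (1 - p) ^ C := by
    rw [binomExpect, sum_range_succ', sum_range_succ _ C, Nat.choose_succ_self]
    simp
  rw [hshift, binomExpect, binomExpect, sum_range_succ']
  simp_rw [mul_choose_succ_mul_pow_mul_pow]
  rw [sum_add_distrib, ← mul_sum, ← mul_sum]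
  simp only [Nat.choose_zero_right, Nat.cast_one, mul_one, pow_zero, tsub_zero]
  ring

lemma binomExpect_le_binomExpect {f g : ℕ → ℝ} (h : ∀ j, f j ≤ g j) (C : ℕ) {p : ℝ}
    (hp : p ∈ Set.Icc (0 : ℝ) 1) : binomExpect C f p ≤ binomExpect C g p := by
  have : 0 ≤ 1 - p := sub_nonneg.mpr hp.2
  have := hp.1
  unfold binomExpect
  gcongr with j
  exact h j

lemma binomExpect_nonneg {f : ℕ → ℝ} (hf : ∀ j, 0 ≤ f j) (C : ℕ) {p : ℝ}
    (hp : p ∈ Set.Icc (0 : ℝ) 1) : 0 ≤ binomExpect C f p := by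
  simpa [binomExpect] using binomExpect_le_binomExpect hf C hp

theorem Monotone.monotoneOn_binomExpect {f : ℕ → ℝ} (hf : Monotone f) (C : ℕ) :
    MonotoneOn (binomExpect C f) (Set.Icc 0 1) := by
  induction C generalizing f with
  | zero => intro p _ q _ _; simp [binomExpect]
  | succ C ih =>
    intro p hp q hq hpq
    have hshift : Monotone fun j => f (j + 1) := fun a b hab => hf (by omega)
    have hA := ih hshift hp hq hpq
    have hB := ih hf hp hq hpq
    have hBA := binomExpect_le_binomExpect (fun j => hf j.le_succ) C hq
    rw [binomExpect_succ, binomExpect_succ]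
    nlinarith [hp.1, hq.2]

lemma binExp_eq_binomExpect (C m : ℕ) :
    binExp C m = binomExpect C (fun j => (min j m : ℕ)) :=
  rfl

lemma binExp_monotoneOn (C m : ℕ) : MonotoneOn (binExp C m) (Set.Icc 0 1) := by
  rw [binExp_eq_binomExpect]
  exact Monotone.monotoneOn_binomExpect (fun a b hab => by gcongr) C

lemma binExp_nonneg (C m : ℕ) {p : ℝ} (hp : p ∈ Set.Icc (0 : ℝ) 1) : 0 ≤ binExp C m p :=
  binomExpect_nonneg (fun _ => Nat.cast_nonneg _) C hp

open MeasureTheory in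
lemma mul_add_div_two_le_integral_div_sub {Q : ℝ → ℝ} {L a b : ℝ} (hab : a < b)
    (hQ : IntervalIntegrable Q volume a b) (hlow : ∀ t ∈ Set.Icc a b, L * t ≤ Q t) :
    L * ((a + b) / 2) ≤ (∫ t in a..b, Q t) / (b - a) := by
  have hlin : ∫ t in a..b, L * t = L * ((a + b) / 2) * (b - a) := by
    rw [intervalIntegral.integral_const_mul, integral_id]
    ring
  rw [le_div_iff₀ (sub_pos.mpr hab), ← hlin]
  exact intervalIntegral.integral_mono_on hab.le
    ((continuous_const_mul L).intervalIntegrable a b) hQ hlow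

theorem stmt_15_general (L U : ℝ) (hL : 0 < L) (hLU : L ≤ U)
    (Q : ℝ → ℝ) (hQmono : Monotone Q)
    (hQ : ∀ x ∈ Set.Icc (0 : ℝ) 1, L * x ≤ Q x ∧ Q x ≤ U * x)
    (k r C : ℕ) (w : ℝ) (hw : w ∈ Set.Ico (0 : ℝ) 1) :
    ((∫ t in w..1, Q t) / (1 - w)) * ((k : ℝ) + binExp C (r - k) (1 - w)) ≥
      (L * (1 + L * w / U) / 2) *
        ((k : ℝ) + binExp C (r - k) (max 0 (1 - U * w / L))) := by
  obtain ⟨hw0, hw1⟩ := hw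
  have hU : 0 < U := hL.trans_le hLU
  have hLw : L * w / U ≤ w := div_le_of_le_mul₀ hU.le hw0 (by nlinarith)
  have hwU : w ≤ U * w / L := (le_div_iff₀ hL).mpr (by nlinarith)
  have hprice : L * (1 + L * w / U) / 2 ≤ (∫ t in w..1, Q t) / (1 - w) :=
    calc L * (1 + L * w / U) / 2 ≤ L * ((w + 1) / 2) := by nlinarith
      _ ≤ (∫ t in w..1, Q t) / (1 - w) :=
        mul_add_div_two_le_integral_div_sub hw1 hQmono.intervalIntegrable
          fun t ht => (hQ t ⟨hw0.trans ht.1, ht.2⟩).1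
  have hθ : max 0 (1 - U * w / L) ∈ Set.Icc (0 : ℝ) 1 :=
    ⟨le_max_left _ _, max_le zero_le_one (by linarith)⟩
  have hcount : binExp C (r - k) (max 0 (1 - U * w / L)) ≤ binExp C (r - k) (1 - w) :=
    binExp_monotoneOn C _ hθ ⟨by linarith, by linarith⟩ (max_le (by linarith) (by linarith))
  exact mul_le_mul hprice (by linarith) (by positivity [binExp_nonneg C (r - k) hθ])
    ((by positivity : 0 ≤ L * (1 + L * w / U) / 2).trans hprice)

/-- Conditional form (given that the `(k+1)`-th largest non-colluding uniform order
statistic equals `w`) of the minorant of the expected Hybrid-VCG welfare: with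
`m = r - k` and `θ = max 0 (1 - U·w/L)`,
`(∫_w^1 Q)/(1-w) · (k + E(1-w)) ≥ L(1 + L·w/U)/2 · (k + E(θ))`. -/
theorem stmt_15 (L U : ℝ) (hL : 0 < L) (hLU : L ≤ U)
    (Q : ℝ → ℝ) (hQmono : Monotone Q)
    (hQ : ∀ x ∈ Set.Icc (0 : ℝ) 1, L * x ≤ Q x ∧ Q x ≤ U * x)
    (k r C : ℕ) (hkr : k ≤ r) (w : ℝ) (hw : w ∈ Set.Ico (0 : ℝ) 1) :
    ((∫ t in w..1, Q t) / (1 - w)) * ((k : ℝ) + binExp C (r - k) (1 - w)) ≥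
      (L * (1 + L * w / U) / 2) *
        ((k : ℝ) + binExp C (r - k) (max 0 (1 - U * w / L))) :=
  stmt_15_general L U hL hLU Q hQmono hQ k r C w hw
end

section
/- Let 0 < L ≤ U be reals, and let Q : ℝ → ℝ satisfy L·x ≤ Q(x) ≤ U·x for all x ∈ [0,1]. Let k, r, C be naturals with k ≤ r, set m = r − k, and let w ∈ [0,1]. Define θ = max 0 (1 − U·w/L) and, for θ' ∈ [0,1], E(θ') = ∑_{j=0}^{C} min(j, m) · (C choose j) · θ'^j · (1 − θ')^{C − j}. Then Q(w) · (k + E(1 − w)) ≥ L · w · (k + E(θ)). (This is the conditional form, given that the (k+1)-th largest non-colluding uniform order statistic equals w, of the minorant of the expected Hybrid-VCG revenue in Lemma 4.7.) -/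
open Finset

noncomputable def binomialWeight (n j : ℕ) (p : ℝ) : ℝ :=
  n.choose j * p ^ j * (1 - p) ^ (n - j)

noncomputable def binomialExpectation (f : ℕ → ℝ) (n : ℕ) (p : ℝ) : ℝ :=
  ∑ j ∈ range (n + 1), f j * binomialWeight n j p

namespace binomialWeight

lemma nonneg {n j : ℕ} {p : ℝ} (hp : p ∈ Set.Icc (0 : ℝ) 1) :
    0 ≤ binomialWeight n j p :=
  mul_nonneg (mul_nonneg (Nat.cast_nonneg _) (pow_nonneg hp.1 _))
    (pow_nonneg (sub_nonneg.2 hp.2) _)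

lemma eq_zero_of_lt {n j : ℕ} (h : n < j) (p : ℝ) : binomialWeight n j p = 0 := by
  simp [binomialWeight, Nat.choose_eq_zero_of_lt h]

lemma succ_zero (n : ℕ) (p : ℝ) :
    binomialWeight (n + 1) 0 p = (1 - p) * binomialWeight n 0 p := by
  simp [binomialWeight, pow_succ, mul_comm]

lemma succ_succ (n j : ℕ) (p : ℝ) :
    binomialWeight (n + 1) (j + 1) p =
      p * binomialWeight n j p + (1 - p) * binomialWeight n (j + 1) p := by
  rcases lt_or_ge n (j + 1) with h | h
  · rw [eq_zero_of_lt h]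
    rcases (Nat.lt_succ_iff.mp h).lt_or_eq with h' | rfl
    · rw [eq_zero_of_lt h', eq_zero_of_lt (by omega)]; ring
    · simp [binomialWeight, pow_succ, mul_comm]
  · simp only [binomialWeight, Nat.choose_succ_succ, Nat.cast_add, Nat.succ_sub_succ]
    rw [show n - j = n - (j + 1) + 1 by omega]
    ring

end binomialWeight

namespace binomialExpectation

lemma nonneg {f : ℕ → ℝ} (hf : ∀ j, 0 ≤ f j) (n : ℕ) {p : ℝ}
    (hp : p ∈ Set.Icc (0 : ℝ) 1) :
    0 ≤ binomialExpectation f n p :=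
  sum_nonneg fun j _ => mul_nonneg (hf j) (binomialWeight.nonneg hp)

lemma succ (f : ℕ → ℝ) (n : ℕ) (p : ℝ) :
    binomialExpectation f (n + 1) p =
      (1 - p) * binomialExpectation f n p + p * binomialExpectation (fun j => f (j + 1)) n p := by
  have hext : binomialExpectation f n p = ∑ j ∈ range (n + 2), f j * binomialWeight n j p := by
    rw [binomialExpectation, sum_range_succ _ (n + 1), binomialWeight.eq_zero_of_lt (by omega),
      mul_zero, add_zero]
  rw [binomialExpectation, hext, binomialExpectation,
    sum_range_succ' (fun j => f j * binomialWeight (n + 1) j p),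
    sum_range_succ' (fun j => f j * binomialWeight n j p)]
  simp only [binomialWeight.succ_succ, binomialWeight.succ_zero, mul_add, sum_add_distrib, mul_sum]
  simp only [mul_left_comm (f _)]
  ring

lemma le_shift {f : ℕ → ℝ} (hf : Monotone f) (n : ℕ) {p : ℝ}
    (hp : p ∈ Set.Icc (0 : ℝ) 1) :
    binomialExpectation f n p ≤ binomialExpectation (fun j => f (j + 1)) n p :=
  sum_le_sum fun j _ =>
    mul_le_mul_of_nonneg_right (hf j.le_succ) (binomialWeight.nonneg hp)

lemma monotoneOn {f : ℕ → ℝ} (hf : Monotone f) (n : ℕ) :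
    MonotoneOn (binomialExpectation f n) (Set.Icc 0 1) := by
  induction n generalizing f with
  | zero => intro p _ q _ _; simp [binomialExpectation, binomialWeight]
  | succ n ih =>
    intro p hp q hq hpq
    have hf' : Monotone fun j => f (j + 1) := fun a b hab => hf (by omega)
    rw [succ, succ]
    set g := fun j => f (j + 1)
    calc (1 - p) * binomialExpectation f n p + p * binomialExpectation g n p
        ≤ (1 - p) * binomialExpectation f n q + p * binomialExpectation g n q :=
          add_le_add (mul_le_mul_of_nonneg_left (ih hf hp hq hpq) (sub_nonneg.2 hp.2))
            (mul_le_mul_of_nonneg_left (ih hf' hp hq hpq) hp.1)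
      _ ≤ (1 - q) * binomialExpectation f n q + q * binomialExpectation g n q := by
          nlinarith [mul_nonneg (sub_nonneg.2 hpq) (sub_nonneg.2 (le_shift hf n hq))]

end binomialExpectation

lemma binExp_eq_binomialExpectation (C m : ℕ) (p : ℝ) :
    binExp C m p = binomialExpectation (fun j => ((min j m : ℕ) : ℝ)) C p :=
  sum_congr rfl fun _ _ => by simp only [binomialWeight]; ring

theorem stmt_16_general (L U : ℝ) (hL : 0 < L) (hLU : L ≤ U)
    (Q : ℝ → ℝ)
    (hQ : ∀ x ∈ Set.Icc (0 : ℝ) 1, L * x ≤ Q x ∧ Q x ≤ U * x)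
    (k r C : ℕ) (w : ℝ) (hw : w ∈ Set.Icc (0 : ℝ) 1) :
    Q w * ((k : ℝ) + binExp C (r - k) (1 - w)) ≥
      L * w * ((k : ℝ) + binExp C (r - k) (max 0 (1 - U * w / L))) := by
  obtain ⟨hw0, hw1⟩ := hw
  set θ := max 0 (1 - U * w / L)
  have hQw : L * w ≤ Q w := (hQ w ⟨hw0, hw1⟩).1
  have hw_le : w ≤ U * w / L := by rw [le_div_iff₀ hL]; nlinarith
  have hθ : θ ∈ Set.Icc (0 : ℝ) 1 := ⟨le_max_left _ _, max_le zero_le_one (by linarith)⟩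
  have hθw : θ ≤ 1 - w := max_le (by linarith) (by linarith)
  have hE := binExp_monotoneOn C (r - k) hθ ⟨by linarith, by linarith⟩ hθw
  calc L * w * ((k : ℝ) + binExp C (r - k) θ)
      ≤ Q w * ((k : ℝ) + binExp C (r - k) θ) := by
        gcongr
        exact add_nonneg (Nat.cast_nonneg k) (binExp_nonneg C _ hθ)
    _ ≤ Q w * ((k : ℝ) + binExp C (r - k) (1 - w)) := by
        gcongr
        exact (mul_nonneg hL.le hw0).trans hQw

/-- Conditional form (given that the `(k+1)`-th largest non-colluding uniform order
statistic equals `w`) of the minorant of the expected Hybrid-VCG revenue: with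
`m = r - k` and `θ = max 0 (1 - U·w/L)`,
`Q(w) · (k + E(1-w)) ≥ L·w · (k + E(θ))`. -/
theorem stmt_16 (L U : ℝ) (hL : 0 < L) (hLU : L ≤ U)
    (Q : ℝ → ℝ)
    (hQ : ∀ x ∈ Set.Icc (0 : ℝ) 1, L * x ≤ Q x ∧ Q x ≤ U * x)
    (k r C : ℕ) (hkr : k ≤ r) (w : ℝ) (hw : w ∈ Set.Icc (0 : ℝ) 1) :
    Q w * ((k : ℝ) + binExp C (r - k) (1 - w)) ≥
      L * w * ((k : ℝ) + binExp C (r - k) (max 0 (1 - U * w / L))) :=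
  stmt_16_general L U hL hLU Q hQ k r C w hw
end
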